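/- arXiv:1702.00765 — 7 statements merged into one kernel-verified Lean document; each statement's English description precedes it below -/
import Mathlib

section
/- For every w in the unit circle 𝕋 and every φ̂ ∈ 𝓜(λ), the function φ̂_w belongs to 𝓜(λ), ‖φ̂_w‖ = ‖φ̂‖, and M_{φ̂_w} f = (M_{φ̂} f_{w̄})_w for every f ∈ ℓ²(V) (where w̄ denotes the complex conjugate of w). -/
open Filter Finset Classical

set_option linter.unusedVariables false
open scoped ComplexConjugate ENNReal

noncomputable section
attribute [local instance] Classical.propDecidable

/-- A countably infinite rooted directed tree, encoded by the parent function
(with the convention `par root = root`) and the depth function `|·|`. -/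
structure DirTree (V : Type*) where
  root : V
  par : V → V
  depth : V → ℕ
  par_root : par root = root
  depth_eq_zero : ∀ v, depth v = 0 ↔ v = root
  depth_par : ∀ v, v ≠ root → depth (par v) + 1 = depth v

variable {V : Type*}

/-- The tree is leafless: every vertex has a child. -/
def DirTree.Leafless (T : DirTree V) : Prop :=
  ∀ u : V, ∃ v : V, v ≠ T.root ∧ T.par v = u

/-- `wProd T lam v k = λ_{par^k(v)|v}`, the product of the weights along `k` steps up from `v`. -/
def wProd (T : DirTree V) (lam : V → ℂ) (v : V) (k : ℕ) : ℂ :=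
  ∏ n ∈ Finset.range k, lam (T.par^[n] v)

/-- `(Γ_φ f)(v) = ∑_{k=0}^{|v|} λ_{par^k(v)|v} φ(k) f(par^k(v))`. -/
def Gamma (T : DirTree V) (lam : V → ℂ) (φ : ℕ → ℂ) (f : V → ℂ) (v : V) : ℂ :=
  ∑ k ∈ Finset.range (T.depth v + 1), wProd T lam v k * φ k * f (T.par^[k] v)

/-- `S` is the weighted shift `S_λ` on `ℓ²(V)`. -/
def IsShift (T : DirTree V) (lam : V → ℝ)
    (S : lp (fun _ : V => ℂ) 2 →L[ℂ] lp (fun _ : V => ℂ) 2) : Prop :=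
  ∀ f : lp (fun _ : V => ℂ) 2, ∀ v : V,
    S f v = if v = T.root then 0 else (lam v : ℂ) * f (T.par v)

/-- `M` is the (bounded, everywhere defined) multiplication operator `M_φ` with symbol `φ`;
the existence of such an `M` is equivalent to `φ ∈ 𝓜(λ)`. -/
def IsMultOp (T : DirTree V) (lam : V → ℝ) (φ : ℕ → ℂ)
    (M : lp (fun _ : V => ℂ) 2 →L[ℂ] lp (fun _ : V => ℂ) 2) : Prop :=
  ∀ f : lp (fun _ : V => ℂ) 2, ∀ v : V,
    M f v = Gamma T (fun u => (lam u : ℂ)) φ (⇑f) v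

/-! Multiplication by `w ^ |·|` is a unitary `U` of `ℓ²(V)`, and a term-by-term computation on
`Γ` shows `M_{φ_w} = U M_φ U⁻¹`; being a unitary conjugate of `M_φ`, it is bounded with the
same norm. -/

lemma DirTree.depth_iterate_par_add (T : DirTree V) {v : V} {k : ℕ} (hk : k ≤ T.depth v) :
    T.depth (T.par^[k] v) + k = T.depth v := by
  induction k with
  | zero => rfl
  | succ k ih =>
    have hup := ih (by omega)
    have hne : T.par^[k] v ≠ T.root := by
      rintro h
      rw [h, (T.depth_eq_zero T.root).2 rfl] at hup
      omega
    have hstep := T.depth_par _ hne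
    rw [Function.iterate_succ_apply']
    omega

/-- The term of `Γ_φ f (v)` coming from `par^k v` picks up `c ^ (|v| - |par^k v|) = c ^ k`. -/
lemma pow_depth_mul_Gamma (T : DirTree V) (lam : V → ℂ) (φ : ℕ → ℂ) (f : V → ℂ) (v : V)
    {c : ℂ} (hc : c ≠ 0) :
    c ^ T.depth v * Gamma T lam φ (fun u => c⁻¹ ^ T.depth u * f u) v =
      Gamma T lam (fun n => c ^ n * φ n) f v := by
  rw [Gamma, Gamma, Finset.mul_sum]
  refine Finset.sum_congr rfl fun k hk => ?_
  set d := T.depth (T.par^[k] v)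
  have hdepth : c ^ T.depth v = c ^ d * c ^ k := by
    rw [← pow_add, T.depth_iterate_par_add (Nat.lt_succ_iff.1 (Finset.mem_range.1 hk))]
  have hcancel : c ^ d * c⁻¹ ^ d = 1 := by rw [← mul_pow, mul_inv_cancel₀ hc, one_pow]
  calc c ^ T.depth v * (wProd T lam v k * φ k * (c⁻¹ ^ d * f (T.par^[k] v)))
      = (c ^ d * c⁻¹ ^ d) * (wProd T lam v k * (c ^ k * φ k) * f (T.par^[k] v)) := by
        rw [hdepth]; ring
    _ = wProd T lam v k * (c ^ k * φ k) * f (T.par^[k] v) := by rw [hcancel, one_mul]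

namespace lp

variable {α 𝕜 : Type*} [RCLike 𝕜] {p : ℝ≥0∞}

lemma memℓp_mul_of_norm_eq_one {u : α → 𝕜} (hu : ∀ i, ‖u i‖ = 1) (f : lp (fun _ : α => 𝕜) p) :
    Memℓp (fun i => u i * f i) p := by
  have hnorm : (fun i => ‖u i * f i‖) = (‖f ·‖) := funext fun i => by rw [norm_mul, hu, one_mul]
  exact Memℓp.of_norm (hnorm ▸ (lp.memℓp f).norm)

def mulOfNormEqOne [Fact (1 ≤ p)] (u : α → 𝕜) (hu : ∀ i, ‖u i‖ = 1) :
    lp (fun _ : α => 𝕜) p →ₗᵢ[𝕜] lp (fun _ : α => 𝕜) p where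
  toFun f := ⟨fun i => u i * f i, memℓp_mul_of_norm_eq_one hu f⟩
  map_add' f g := lp.ext <| funext fun i => mul_add (u i) (f i) (g i)
  map_smul' a f := lp.ext <| funext fun i => mul_left_comm (u i) a (f i)
  norm_map' f := by
    have hnorm (i : α) : ‖u i * f i‖ = ‖f i‖ := by rw [norm_mul, hu, one_mul]
    rcases p.dichotomy with rfl | hp
    · exact congrArg iSup (funext hnorm)
    · have hp' : 0 < p.toReal := by linarith
      rw [lp.norm_eq_tsum_rpow hp', lp.norm_eq_tsum_rpow hp']
      exact congrArg (· ^ (1 / p.toReal)) (tsum_congr fun i => congrArg (· ^ p.toReal) (hnorm i))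

def mulUnitary [Fact (1 ≤ p)] (u : α → 𝕜) (hu : ∀ i, ‖u i‖ = 1) :
    lp (fun _ : α => 𝕜) p ≃ₗᵢ[𝕜] lp (fun _ : α => 𝕜) p :=
  have hu' : ∀ i, ‖(starRingEnd 𝕜) (u i)‖ = 1 := fun i => by rw [RCLike.norm_conj, hu]
  have hinv : ∀ i, u i * (starRingEnd 𝕜) (u i) = 1 := fun i => by
    rw [RCLike.mul_conj, hu, RCLike.ofReal_one, one_pow]
  LinearIsometryEquiv.ofLinearIsometry (mulOfNormEqOne u hu)
    (mulOfNormEqOne (fun i => (starRingEnd 𝕜) (u i)) hu').toLinearMap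
    (LinearMap.ext fun f => lp.ext <| funext fun i => by
      simp [mulOfNormEqOne, ← mul_assoc, hinv])
    (LinearMap.ext fun f => lp.ext <| funext fun i => by
      simp [mulOfNormEqOne, ← mul_assoc, mul_comm _ (u i), hinv])

@[simp] lemma mulUnitary_symm_apply [Fact (1 ≤ p)] (u : α → 𝕜) (hu : ∀ i, ‖u i‖ = 1)
    (f : lp (fun _ : α => 𝕜) p) (i : α) :
    (mulUnitary u hu).symm f i = (starRingEnd 𝕜) (u i) * f i := rfl

end lp

theorem stmt0_general (T : DirTree V)
    (lam : V → ℝ)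
    (w : ℂ) (hw : ‖w‖ = 1) (φ : ℕ → ℂ)
    (M : lp (fun _ : V => ℂ) 2 →L[ℂ] lp (fun _ : V => ℂ) 2) (hM : IsMultOp T lam φ M) :
    ∃ Mw : lp (fun _ : V => ℂ) 2 →L[ℂ] lp (fun _ : V => ℂ) 2,
      IsMultOp T lam (fun n => w ^ n * φ n) Mw ∧ ‖Mw‖ = ‖M‖ ∧
      ∀ f : lp (fun _ : V => ℂ) 2,
        ∀ hf : Memℓp (fun v => (starRingEnd ℂ w) ^ (T.depth v) * f v) 2,
          ∀ v : V, Mw f v = w ^ (T.depth v) * (M (⟨fun u => (starRingEnd ℂ w) ^ (T.depth u) * f u, hf⟩ : lp (fun _ : V => ℂ) 2)) v := by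
  set U : lp (fun _ : V => ℂ) 2 ≃ₗᵢ[ℂ] lp (fun _ : V => ℂ) 2 :=
    lp.mulUnitary (fun v => w ^ T.depth v) (fun v => by rw [norm_pow, hw, one_pow])
  have hUsymm (f : lp (fun _ : V => ℂ) 2) :
      ⇑(U.symm f) = fun v => (starRingEnd ℂ w) ^ T.depth v * f v :=
    funext fun v => by rw [lp.mulUnitary_symm_apply, map_pow]
  refine ⟨(U : lp (fun _ : V => ℂ) 2 →L[ℂ] lp (fun _ : V => ℂ) 2) ∘L M ∘L
      (U.symm : lp (fun _ : V => ℂ) 2 →L[ℂ] lp (fun _ : V => ℂ) 2), fun f v => ?_, ?_,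
    fun f hf v => ?_⟩
  · have hconj : starRingEnd ℂ w = w⁻¹ := (Complex.inv_eq_conj hw).symm
    have hw0 : w ≠ 0 := norm_ne_zero_iff.1 (by rw [hw]; exact one_ne_zero)
    show w ^ T.depth v * M (U.symm f) v = _
    rw [hM, hUsymm, hconj, pow_depth_mul_Gamma T _ φ f v hw0]
  · rw [ContinuousLinearMap.opNorm_linearIsometryEquiv_comp,
      ContinuousLinearMap.opNorm_comp_linearIsometryEquiv]
  · show w ^ T.depth v * M (U.symm f) v = _
    rw [show U.symm f = ⟨_, hf⟩ from lp.ext (hUsymm f)]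

/-- Lemma (ii): for `w ∈ 𝕋` and `φ ∈ 𝓜(λ)`, the symbol
`φ_w(n) = wⁿφ(n)` belongs to `𝓜(λ)`, `‖M_{φ_w}‖ = ‖M_φ‖`, and
`M_{φ_w} f = (M_φ f_{w̄})_w` for every `f ∈ ℓ²(V)`. -/
theorem stmt0 [Countable V] [Infinite V] (T : DirTree V) (hTl : T.Leafless)
    (lam : V → ℝ) (hlam : ∀ v, v ≠ T.root → 0 < lam v)
    (S : lp (fun _ : V => ℂ) 2 →L[ℂ] lp (fun _ : V => ℂ) 2) (hS : IsShift T lam S)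
    (w : ℂ) (hw : ‖w‖ = 1) (φ : ℕ → ℂ)
    (M : lp (fun _ : V => ℂ) 2 →L[ℂ] lp (fun _ : V => ℂ) 2) (hM : IsMultOp T lam φ M) :
    ∃ Mw : lp (fun _ : V => ℂ) 2 →L[ℂ] lp (fun _ : V => ℂ) 2,
      IsMultOp T lam (fun n => w ^ n * φ n) Mw ∧ ‖Mw‖ = ‖M‖ ∧
      ∀ f : lp (fun _ : V => ℂ) 2,
        ∀ hf : Memℓp (fun v => (starRingEnd ℂ w) ^ (T.depth v) * f v) 2,
          ∀ v : V, Mw f v = w ^ (T.depth v) * (M (⟨fun u => (starRingEnd ℂ w) ^ (T.depth u) * f u, hf⟩ : lp (fun _ : V => ℂ) 2)) v :=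
  stmt0_general T lam w hw φ M hM
end
end

section
/- For every φ̂ ∈ 𝓜(λ), the mapping 𝕋 ∋ w ↦ M_{φ̂_w} ∈ B(ℓ²(V)) is continuous in the strong operator topology. -/
open Filter Finset Classical

set_option linter.unusedVariables false
open scoped ComplexConjugate ENNReal

noncomputable section
attribute [local instance] Classical.propDecidable

variable {V : Type*}

/-! Writing `D_w` for the diagonal operator `f ↦ (v ↦ w^{|v|} f v)`, one has
`M_{φ_w} = D_w M_φ D_{w⁻¹}`, because `|v| - |par^k v| = k` turns the factor `w^k` of the
`k`-th term of `Γ` into `w^{|v|} w^{-|par^k v|}`. For `|w| = 1` each `D_w` is a contraction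
and `w ↦ D_w f` is continuous by dominated convergence; a uniformly bounded, strongly continuous
family of operators applied to a continuous path is continuous. -/

open scoped Topology

namespace lp

variable {ι 𝕜 : Type*} [NontriviallyNormedField 𝕜] {p : ℝ≥0∞} [Fact (1 ≤ p)]

def pointwiseMul (c : ι → 𝕜) (hc : ∀ i, ‖c i‖ ≤ 1) :
    lp (fun _ : ι => 𝕜) p →L[𝕜] lp (fun _ : ι => 𝕜) p :=
  LinearMap.mkContinuous
    { toFun := fun f => ⟨c * ⇑f, (lp.memℓp f).mono' fun i => by
          simpa [norm_mul] using mul_le_of_le_one_left (norm_nonneg (f i)) (hc i)⟩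
      map_add' := fun f g => by ext1; simp only [lp.coeFn_add]; exact mul_add c _ _
      map_smul' := fun a f => by ext1; exact mul_left_comm _ _ _ }
    1 fun f => by
      simpa using lp.norm_mono (zero_lt_one.trans_le Fact.out).ne' (x := ⟨c * ⇑f, _⟩) fun i => by
        simpa [norm_mul] using mul_le_of_le_one_left (norm_nonneg (f i)) (hc i)

@[simp]
theorem coe_pointwiseMul (c : ι → 𝕜) (hc : ∀ i, ‖c i‖ ≤ 1) (f : lp (fun _ : ι => 𝕜) p) :
    ⇑(pointwiseMul c hc f) = c * ⇑f :=
  rfl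

theorem norm_pointwiseMul_le (c : ι → 𝕜) (hc : ∀ i, ‖c i‖ ≤ 1) :
    ‖(pointwiseMul c hc : lp (fun _ : ι => 𝕜) p →L[𝕜] lp (fun _ : ι => 𝕜) p)‖ ≤ 1 :=
  LinearMap.mkContinuous_norm_le _ zero_le_one _

theorem continuous_pointwiseMul_apply {X : Type*} [TopologicalSpace X] (hp : p ≠ ∞)
    (c : X → ι → 𝕜) (hc : ∀ x i, ‖c x i‖ ≤ 1) (hcont : ∀ i, Continuous fun x => c x i)
    (f : lp (fun _ : ι => 𝕜) p) : Continuous fun x => pointwiseMul (c x) (hc x) f := by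
  have hp₀ : 0 < p.toReal := ENNReal.toReal_pos (zero_lt_one.trans_le Fact.out).ne' hp
  refine continuous_iff_continuousAt.2 fun x₀ => tendsto_iff_norm_sub_tendsto_zero.2 ?_
  have hsum : Tendsto (fun x => ∑' i, ‖(c x i - c x₀ i) * f i‖ ^ p.toReal) (𝓝 x₀) (𝓝 0) := by
    have hlim : ∀ i, Tendsto (fun x => ‖(c x i - c x₀ i) * f i‖ ^ p.toReal) (𝓝 x₀) (𝓝 0) :=
      fun i => by
        have h : Continuous fun x => ‖(c x i - c x₀ i) * f i‖ ^ p.toReal :=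
          (((hcont i).sub continuous_const).mul continuous_const).norm.rpow_const
            fun _ => Or.inr hp₀.le
        simpa [Real.zero_rpow hp₀.ne'] using h.tendsto x₀
    have hbound : ∀ x i, ‖‖(c x i - c x₀ i) * f i‖ ^ p.toReal‖ ≤ 2 ^ p.toReal * ‖f i‖ ^ p.toReal :=
      fun x i => by
        rw [Real.norm_of_nonneg (by positivity), ← Real.mul_rpow zero_le_two (norm_nonneg _)]
        gcongr
        rw [norm_mul]
        gcongr
        calc ‖c x i - c x₀ i‖ ≤ ‖c x i‖ + ‖c x₀ i‖ := norm_sub_le _ _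
          _ ≤ 2 := by linarith [hc x i, hc x₀ i]
    simpa using tendsto_tsum_of_dominated_convergence
      (((lp.memℓp f).summable hp₀).mul_left _) hlim (Eventually.of_forall hbound)
  have hnorm := hsum.rpow_const (p := 1 / p.toReal) (Or.inr (by positivity))
  rw [Real.zero_rpow (by positivity)] at hnorm
  refine hnorm.congr fun x => ?_
  rw [lp.norm_eq_tsum_rpow hp₀]
  simp only [coeFn_sub, coe_pointwiseMul, Pi.sub_apply, Pi.mul_apply, sub_mul]

end lp

theorem Continuous.clm_apply_of_norm_le {X 𝕜 E F : Type*} [TopologicalSpace X]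
    [NontriviallyNormedField 𝕜] [SeminormedAddCommGroup E] [NormedSpace 𝕜 E]
    [SeminormedAddCommGroup F] [NormedSpace 𝕜 F] {A : X → E →L[𝕜] F} {C : ℝ}
    (hA : ∀ x, ‖A x‖ ≤ C) (hAe : ∀ e, Continuous fun x => A x e) {g : X → E}
    (hg : Continuous g) : Continuous fun x => A x (g x) := by
  refine continuous_iff_continuousAt.2 fun x₀ => tendsto_iff_norm_sub_tendsto_zero.2 ?_
  have hbound : Tendsto (fun x => C * ‖g x - g x₀‖ + ‖A x (g x₀) - A x₀ (g x₀)‖) (𝓝 x₀)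
      (𝓝 (C * 0 + 0)) :=
    ((tendsto_iff_norm_sub_tendsto_zero.1 (hg.tendsto x₀)).const_mul C).add
      (tendsto_iff_norm_sub_tendsto_zero.1 ((hAe (g x₀)).tendsto x₀))
  rw [mul_zero, add_zero] at hbound
  refine squeeze_zero (fun _ => norm_nonneg _) (fun x => ?_) hbound
  calc ‖A x (g x) - A x₀ (g x₀)‖
      = ‖A x (g x - g x₀) + (A x (g x₀) - A x₀ (g x₀))‖ := by rw [map_sub, sub_add_sub_cancel]
    _ ≤ ‖A x (g x - g x₀)‖ + ‖A x (g x₀) - A x₀ (g x₀)‖ := norm_add_le _ _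
    _ ≤ C * ‖g x - g x₀‖ + ‖A x (g x₀) - A x₀ (g x₀)‖ := by
        gcongr
        exact (A x).le_of_opNorm_le (hA x) _

namespace DirTree

variable (T : DirTree V)

theorem depth_iterate_par_add_s1 {v : V} {k : ℕ} (hk : k ≤ T.depth v) :
    T.depth (T.par^[k] v) + k = T.depth v := by
  induction k with
  | zero => rfl
  | succ k ih =>
    have ih := ih (by omega)
    have hne : T.par^[k] v ≠ T.root := fun h => by
      rw [h, (T.depth_eq_zero _).2 rfl] at ih
      omega
    rw [Function.iterate_succ_apply', ← ih, ← T.depth_par _ hne]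
    ring

theorem gamma_pow_mul (lam : V → ℂ) (φ : ℕ → ℂ) (f : V → ℂ) {w : ℂ} (hw : w ≠ 0) (v : V) :
    Gamma T lam (fun n => w ^ n * φ n) f v
      = w ^ T.depth v * Gamma T lam φ (fun u => w⁻¹ ^ T.depth u * f u) v := by
  rw [Gamma, Gamma, Finset.mul_sum]
  refine Finset.sum_congr rfl fun k hk => ?_
  have hdepth := T.depth_iterate_par_add_s1 (Nat.lt_succ_iff.1 (Finset.mem_range.1 hk))
  have hpow : w ^ k = w ^ T.depth v * w⁻¹ ^ T.depth (T.par^[k] v) := by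
    rw [← hdepth, pow_add, inv_pow, mul_right_comm, mul_inv_cancel₀ (pow_ne_zero _ hw), one_mul]
  rw [hpow]
  ring

variable {p : ℝ≥0∞} [Fact (1 ≤ p)]

def depthRotation (w : Circle) : lp (fun _ : V => ℂ) p →L[ℂ] lp (fun _ : V => ℂ) p :=
  lp.pointwiseMul (fun v => (w : ℂ) ^ T.depth v) fun v => by rw [norm_pow, Circle.norm_coe, one_pow]

theorem continuous_depthRotation_apply (hp : p ≠ ∞) (f : lp (fun _ : V => ℂ) p) :
    Continuous fun w => T.depthRotation w f :=
  lp.continuous_pointwiseMul_apply hp _ _ (fun v => continuous_subtype_val.pow _) f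

end DirTree

theorem IsMultOp.eq_depthRotation {T : DirTree V} {lam : V → ℝ} {φ : ℕ → ℂ}
    {M M₁ : lp (fun _ : V => ℂ) 2 →L[ℂ] lp (fun _ : V => ℂ) 2} {w : Circle}
    (hM : IsMultOp T lam (fun n => (w : ℂ) ^ n * φ n) M) (hM₁ : IsMultOp T lam φ M₁)
    (f : lp (fun _ : V => ℂ) 2) :
    M f = T.depthRotation w (M₁ (T.depthRotation w⁻¹ f)) := by
  ext v
  simp only [DirTree.depthRotation, lp.coe_pointwiseMul, Pi.mul_apply, hM f v, hM₁ _ v,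
    T.gamma_pow_mul _ _ _ w.coe_ne_zero, Circle.coe_inv]
  rfl

theorem stmt1_general (T : DirTree V)
    (lam : V → ℝ)
    (φ : ℕ → ℂ)
    (Mfam : ℂ → (lp (fun _ : V => ℂ) 2 →L[ℂ] lp (fun _ : V => ℂ) 2))
    (hMfam : ∀ w : ℂ, ‖w‖ = 1 → IsMultOp T lam (fun n => w ^ n * φ n) (Mfam w)) :
    ∀ f : lp (fun _ : V => ℂ) 2,
      ContinuousOn (fun w : ℂ => Mfam w f) {w : ℂ | ‖w‖ = 1} := by
  intro f
  have hM₁ : IsMultOp T lam φ (Mfam 1) := by simpa using hMfam 1 norm_one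
  have hcont : Continuous fun w : Circle => Mfam w f := by
    simp_rw [fun w : Circle => (hMfam w w.norm_coe).eq_depthRotation hM₁ f]
    exact Continuous.clm_apply_of_norm_le (fun w => lp.norm_pointwiseMul_le _ _)
      (T.continuous_depthRotation_apply (p := 2) ENNReal.ofNat_ne_top)
      ((Mfam 1).continuous.comp
        ((T.continuous_depthRotation_apply ENNReal.ofNat_ne_top f).comp continuous_inv))
  rw [continuousOn_iff_continuous_domRestrict]
  exact hcont.comp (continuous_subtype_val.subtype_mk fun w => mem_sphere_zero_iff_norm.2 w.2)

/-- Lemma (iv): for `φ ∈ 𝓜(λ)`, the map `𝕋 ∋ w ↦ M_{φ_w}` is continuous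
in the strong operator topology, i.e. `w ↦ M_{φ_w} f` is continuous on `𝕋` for every `f`. -/
theorem stmt1 [Countable V] [Infinite V] (T : DirTree V) (hTl : T.Leafless)
    (lam : V → ℝ) (hlam : ∀ v, v ≠ T.root → 0 < lam v)
    (S : lp (fun _ : V => ℂ) 2 →L[ℂ] lp (fun _ : V => ℂ) 2) (hS : IsShift T lam S)
    (φ : ℕ → ℂ)
    (Mfam : ℂ → (lp (fun _ : V => ℂ) 2 →L[ℂ] lp (fun _ : V => ℂ) 2))
    (hMfam : ∀ w : ℂ, ‖w‖ = 1 → IsMultOp T lam (fun n => w ^ n * φ n) (Mfam w)) :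
    ∀ f : lp (fun _ : V => ℂ) 2,
      ContinuousOn (fun w : ℂ => Mfam w f) {w : ℂ | ‖w‖ = 1} :=
  stmt1_general T lam φ Mfam hMfam
end
end

section
/- Let φ̂ ∈ 𝓜(λ) and let {p_n}_{n=1}^∞ be trigonometric polynomials such that (a) α := sup{|p̂_n(k)| : n ∈ ℕ, k ∈ ℕ₀} < ∞, (b) lim_{n→∞} p̂_n(k) = 1 for every k ∈ ℕ₀, and (c) β := sup_n ∫_𝕋 |p_n(w)| dw < ∞ (normalized Lebesgue measure). Then: (i) p̂_n·φ̂ ∈ 𝓜(λ) for every n; (ii) ‖M_{p̂_n·φ̂}‖ ≤ β·‖M_φ̂‖ for every n; and (iii) M_{p̂_n·φ̂} → M_φ̂ in the strong operator topology as n → ∞. -/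
/-! Write `D_θ` for the diagonal unitary `f ↦ (e^{iθ|v|} f(v))_v` on `ℓ²(V)`. Since
`|par^k v| = |v| - k`, the conjugate `D_{-θ} M_φ D_θ` is the multiplier with symbol
`e^{-ikθ} φ(k)`. Averaging it against `p_n(e^{iθ}) dθ / 2π` (a strong integral) therefore gives,
by orthogonality of the characters `e^{ijθ}`, the multiplier with symbol `p̂_n φ`, and its norm is
at most `‖p_n‖_{L¹} ‖M_φ‖` because every `D_θ` is unitary.

On a basis vector, `((M_{p̂_n φ} - M_φ) e_u)(v) = (p̂_n(|v| - |u|) - 1) (M_φ e_u)(v)`, which tends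
to `0` boundedly in every coordinate, hence in `ℓ²` by dominated convergence. The uniform bound
on `‖M_{p̂_n φ}‖` then spreads the convergence from the basis vectors to all of `ℓ²(V)`. -/

open Filter Finset Classical

set_option linter.unusedVariables false
open scoped ComplexConjugate ENNReal

noncomputable section
attribute [local instance] Classical.propDecidable

variable {V : Type*}

open scoped Topology

namespace lp

variable {α ι 𝕜 : Type*} {E : ι → Type*} [∀ i, NormedAddCommGroup (E i)]
  {p : ℝ≥0∞} [Fact (1 ≤ p)]

theorem tendsto_zero_of_dominated (hp : p ≠ ∞) {l : Filter α} {F : α → lp E p}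
    {g : ι → ℝ} (hg : Memℓp g p) (hFg : ∀ a i, ‖F a i‖ ≤ g i)
    (hF : ∀ i, Tendsto (fun a => F a i) l (𝓝 0)) : Tendsto F l (𝓝 0) := by
  have hp₀ : 0 < p.toReal :=
    ENNReal.toReal_pos (zero_lt_one.trans_le Fact.out).ne' hp
  have hsum : Tendsto (fun a => ∑' i, ‖F a i‖ ^ p.toReal) l (𝓝 0) := by
    simpa using tendsto_tsum_of_dominated_convergence (g := fun _ => (0 : ℝ))
      ((memℓp_gen_iff hp₀).1 hg)
      (fun i => by simpa [hp₀.ne'] using (hF i).norm.rpow_const (Or.inr hp₀.le))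
      (Eventually.of_forall fun a i => by
        rw [Real.norm_of_nonneg (by positivity)]
        exact Real.rpow_le_rpow (norm_nonneg _) ((hFg a i).trans (le_abs_self _)) hp₀.le)
  rw [tendsto_zero_iff_norm_tendsto_zero]
  simp_rw [norm_eq_tsum_rpow hp₀]
  simpa [hp₀.ne'] using hsum.rpow_const (p := 1 / p.toReal) (Or.inr (by positivity))

section NormedField

variable [NormedField 𝕜] [∀ i, NormedSpace 𝕜 (E i)]

def diagonalIsometry (w : ι → 𝕜) (hw : ∀ i, ‖w i‖ = 1) : lp E p →ₗᵢ[𝕜] lp E p where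
  toFun f := ⟨fun i => w i • f i, (lp.memℓp f).mono' fun i => by rw [norm_smul, hw, one_mul]⟩
  map_add' f g := lp.ext <| funext fun i => smul_add _ _ _
  map_smul' c f := lp.ext <| funext fun i => smul_comm _ _ _
  norm_map' f := by
    have hp : p ≠ 0 := (zero_lt_one.trans_le Fact.out).ne'
    refine le_antisymm (lp.norm_mono hp fun i => ?_) (lp.norm_mono hp fun i => ?_) <;>
      simp [norm_smul, hw]

@[simp]
theorem diagonalIsometry_apply (w : ι → 𝕜) (hw : ∀ i, ‖w i‖ = 1) (f : lp E p) (i : ι) :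
    diagonalIsometry w hw f i = w i • f i := rfl

theorem continuous_diagonalIsometry_apply {X : Type*} [TopologicalSpace X] (hp : p ≠ ∞)
    {w : X → ι → 𝕜} (hw : ∀ x i, ‖w x i‖ = 1) (hwc : ∀ i, Continuous fun x => w x i)
    (f : lp E p) : Continuous fun x => diagonalIsometry (w x) (hw x) f := by
  refine continuous_iff_continuousAt.2 fun x₀ => tendsto_sub_nhds_zero_iff.1 ?_
  refine tendsto_zero_of_dominated hp ((lp.memℓp f).norm.const_mul 2) (fun x i => ?_) fun i => ?_
  · rw [coeFn_sub, Pi.sub_apply, diagonalIsometry_apply, diagonalIsometry_apply, ← sub_smul,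
      norm_smul]
    gcongr
    exact (norm_sub_le _ _).trans (by rw [hw, hw]; norm_num)
  · simp only [coeFn_sub, Pi.sub_apply, diagonalIsometry_apply, ← sub_smul]
    simpa using (((hwc i).tendsto x₀).sub_const (w x₀ i)).smul_const (f i)

end NormedField

theorem tendsto_apply_of_tendsto_single {F : Type*} [NontriviallyNormedField 𝕜]
    [∀ i, NormedSpace 𝕜 (E i)] [NormedAddCommGroup F] [NormedSpace 𝕜 F] (hp : p ≠ ∞)
    {l : Filter α} {A : α → lp E p →L[𝕜] F} {B : lp E p →L[𝕜] F} (hA : ∃ C, ∀ a, ‖A a‖ ≤ C)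
    (hAB : ∀ i c, Tendsto (fun a => A a (lp.single p i c)) l (𝓝 (B (lp.single p i c))))
    (f : lp E p) : Tendsto (fun a => A a f) l (𝓝 (B f)) := by
  have hclosed : IsClosed {f | Tendsto (fun a => A a f) l (𝓝 (B f))} :=
    Equicontinuous.isClosed_setOfPred_tendsto ((NormedSpace.equicontinuous_TFAE A).out 5 1 |>.1 hA)
      B.continuous
  refine hclosed.mem_of_tendsto (lp.hasSum_single hp f) (Eventually.of_forall fun s => ?_)
  simpa only [Set.mem_ofPred_eq, map_sum] using tendsto_finsetSum s fun i _ => hAB i (f i)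

end lp

theorem Continuous.apply_of_isometry {X Y Z : Type*} [TopologicalSpace X] [PseudoMetricSpace Y]
    [PseudoMetricSpace Z] {U : X → Y → Z} (hU : ∀ x, Isometry (U x))
    (hUc : ∀ y, Continuous fun x => U x y) {g : X → Y} (hg : Continuous g) :
    Continuous fun x => U x (g x) := by
  refine continuous_iff_continuousAt.2 fun x₀ => tendsto_iff_dist_tendsto_zero.2 ?_
  have hcont : Continuous fun x => dist (g x) (g x₀) + dist (U x (g x₀)) (U x₀ (g x₀)) :=
    (hg.dist continuous_const).add ((hUc (g x₀)).dist continuous_const)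
  have hlim := hcont.tendsto x₀
  simp only [dist_self, add_zero] at hlim
  refine squeeze_zero (fun _ => dist_nonneg) (fun x => ?_) hlim
  calc dist (U x (g x)) (U x₀ (g x₀))
      ≤ dist (U x (g x)) (U x (g x₀)) + dist (U x (g x₀)) (U x₀ (g x₀)) := dist_triangle _ _ _
    _ = dist (g x) (g x₀) + dist (U x (g x₀)) (U x₀ (g x₀)) := by rw [(hU x).dist_eq]

namespace ContinuousLinearMap

variable {𝕜 E F : Type*} [NontriviallyNormedField 𝕜] [NormedAddCommGroup E] [NormedSpace 𝕜 E]
  [CompleteSpace E] [NormedAddCommGroup F] [NormedSpace 𝕜 F]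

theorem exists_norm_le_on_uIcc_of_continuous_apply (A : ℝ → E →L[𝕜] F)
    (hA : ∀ x, Continuous fun t => A t x) (a b : ℝ) : ∃ C, ∀ t ∈ Set.uIcc a b, ‖A t‖ ≤ C := by
  obtain ⟨C, hC⟩ := banach_steinhaus (g := fun t : Set.uIcc a b => A t) fun x => by
    obtain ⟨C, hC⟩ := isCompact_uIcc.exists_bound_of_continuousOn (hA x).continuousOn
    exact ⟨C, fun t => hC t t.2⟩
  exact ⟨C, fun t ht => hC ⟨t, ht⟩⟩

variable [NormedSpace ℝ F] [SMulCommClass ℝ 𝕜 F]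

def strongIntervalIntegral (A : ℝ → E →L[𝕜] F) (hA : ∀ x, Continuous fun t => A t x)
    (a b : ℝ) : E →L[𝕜] F :=
  LinearMap.mkContinuousOfExistsBound
    { toFun x := ∫ t in a..b, A t x
      map_add' x y := by
        simp only [map_add]
        exact intervalIntegral.integral_add ((hA x).intervalIntegrable a b)
          ((hA y).intervalIntegrable a b)
      map_smul' c x := by
        simp only [map_smul, RingHom.id_apply]
        exact intervalIntegral.integral_smul c _ }
    (by
      obtain ⟨C, hC⟩ := exists_norm_le_on_uIcc_of_continuous_apply A hA a b
      refine ⟨C * |b - a|, fun x => ?_⟩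
      calc ‖∫ t in a..b, A t x‖ ≤ C * ‖x‖ * |b - a| :=
            intervalIntegral.norm_integral_le_of_norm_le_const fun t ht =>
              (A t).le_of_opNorm_le (hC t (Set.uIoc_subset_uIcc ht)) x
        _ = C * |b - a| * ‖x‖ := by ring)

theorem strongIntervalIntegral_apply (A : ℝ → E →L[𝕜] F) (hA : ∀ x, Continuous fun t => A t x)
    (a b : ℝ) (x : E) : strongIntervalIntegral A hA a b x = ∫ t in a..b, A t x := rfl

theorem norm_strongIntervalIntegral_le (A : ℝ → E →L[𝕜] F)
    (hA : ∀ x, Continuous fun t => A t x) {a b : ℝ} (hab : a ≤ b) {g : ℝ → ℝ}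
    (hg : IntervalIntegrable g MeasureTheory.volume a b) (hAg : ∀ t ∈ Set.Icc a b, ‖A t‖ ≤ g t) :
    ‖strongIntervalIntegral A hA a b‖ ≤ ∫ t in a..b, g t := by
  refine opNorm_le_bound _ (intervalIntegral.integral_nonneg hab fun t ht =>
    (norm_nonneg _).trans (hAg t ht)) fun x => ?_
  rw [strongIntervalIntegral_apply, ← intervalIntegral.integral_mul_const]
  refine (intervalIntegral.norm_integral_le_integral_norm hab).trans ?_
  exact intervalIntegral.integral_mono_on hab ((hA x).norm.intervalIntegrable a b)
    (hg.mul_const _) fun t ht => (A t).le_of_opNorm_le (hAg t ht) x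

end ContinuousLinearMap

section TrigPoly

open Complex
open scoped Real

def trigPoly (s : Finset ℤ) (c : ℤ → ℂ) (θ : ℝ) : ℂ := ∑ j ∈ s, c j * exp (θ * I) ^ j

theorem continuous_exp_ofReal_mul_I_zpow (m : ℤ) : Continuous fun θ : ℝ => exp (θ * I) ^ m :=
  (by fun_prop : Continuous fun θ : ℝ => exp (θ * I)).zpow₀ m fun _ => Or.inl (exp_ne_zero _)

theorem continuous_trigPoly (s : Finset ℤ) (c : ℤ → ℂ) : Continuous (trigPoly s c) :=
  continuous_finsetSum s fun j _ => continuous_const.mul (continuous_exp_ofReal_mul_I_zpow j)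

theorem integral_exp_mul_I_zpow (m : ℤ) :
    ∫ θ in (0 : ℝ)..2 * π, exp (θ * I) ^ m = if m = 0 then (2 * π : ℂ) else 0 := by
  simp_rw [← Complex.exp_int_mul]
  split_ifs with hm
  · simp [hm]
  · have hmI : (m * I : ℂ) ≠ 0 := mul_ne_zero (Int.cast_ne_zero.2 hm) I_ne_zero
    have hlin : ∀ θ : ℝ, (m * (θ * I) : ℂ) = m * I * θ := fun θ => by ring
    simp_rw [hlin, integral_exp_mul_complex hmI]
    have hperiod : (m * I * ↑(2 * π) : ℂ) = m * (2 * π * I) := by push_cast; ring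
    rw [hperiod, exp_int_mul_two_pi_mul_I]
    simp

theorem inv_two_pi_mul_integral_trigPoly_mul_zpow (s : Finset ℤ) (c : ℤ → ℂ) (k : ℤ) :
    (2 * π : ℂ)⁻¹ * ∫ θ in (0 : ℝ)..2 * π, trigPoly s c θ * exp (θ * I) ^ (-k)
      = if k ∈ s then c k else 0 := by
  have hsplit : ∀ θ : ℝ, trigPoly s c θ * exp (θ * I) ^ (-k)
      = ∑ j ∈ s, c j * exp (θ * I) ^ (j - k) := fun θ => by
    simp only [trigPoly, Finset.sum_mul, mul_assoc, sub_eq_add_neg,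
      zpow_add₀ (exp_ne_zero _)]
  simp_rw [hsplit]
  have hint : ∀ j, IntervalIntegrable (fun θ : ℝ => c j * exp (θ * I) ^ (j - k))
      MeasureTheory.volume 0 (2 * π) := fun j =>
    (continuous_const.mul (continuous_exp_ofReal_mul_I_zpow _)).intervalIntegrable _ _
  rw [intervalIntegral.integral_finsetSum fun j _ => hint j]
  simp_rw [intervalIntegral.integral_const_mul, integral_exp_mul_I_zpow, sub_eq_zero,
    mul_ite, mul_zero, Finset.sum_ite_eq']
  split_ifs
  · field_simp
  · simp

end TrigPoly

local notation "ℓ²(" X ")" => lp (fun _ : X => ℂ) 2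

open Complex hiding Gamma
open scoped Real

namespace DirTree

variable (T : DirTree V)

theorem depth_iterate_par {v : V} {k : ℕ} (hk : k ≤ T.depth v) :
    T.depth (T.par^[k] v) = T.depth v - k := by
  induction k with
  | zero => simp
  | succ k ih =>
    have hne : T.par^[k] v ≠ T.root := fun h => by
      have := (T.depth_eq_zero _).2 h
      omega
    have := T.depth_par _ hne
    rw [Function.iterate_succ_apply']
    omega

def phase (θ : ℝ) : ℓ²(V) →ₗᵢ[ℂ] ℓ²(V) :=
  lp.diagonalIsometry (fun v => exp (θ * I) ^ T.depth v) fun v => by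
    rw [norm_pow, norm_exp_ofReal_mul_I, one_pow]

theorem phase_apply (θ : ℝ) (f : ℓ²(V)) (v : V) :
    T.phase θ f v = exp (θ * I) ^ T.depth v * f v := rfl

theorem continuous_phase_apply (f : ℓ²(V)) : Continuous fun θ => T.phase θ f :=
  lp.continuous_diagonalIsometry_apply (by norm_num) _ (fun v => by fun_prop) f

def phaseConj (M : ℓ²(V) →L[ℂ] ℓ²(V)) (θ : ℝ) : ℓ²(V) →L[ℂ] ℓ²(V) :=
  (T.phase (-θ)).toContinuousLinearMap ∘L M ∘L (T.phase θ).toContinuousLinearMap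

theorem continuous_phaseConj_apply (M : ℓ²(V) →L[ℂ] ℓ²(V)) (f : ℓ²(V)) :
    Continuous fun θ => T.phaseConj M θ f :=
  Continuous.apply_of_isometry (fun θ => (T.phase (-θ)).isometry)
    (fun g => (T.continuous_phase_apply g).comp continuous_neg)
    (M.continuous.comp (T.continuous_phase_apply f))

theorem norm_phaseConj_le (M : ℓ²(V) →L[ℂ] ℓ²(V)) (θ : ℝ) : ‖T.phaseConj M θ‖ ≤ ‖M‖ :=
  (T.phaseConj M θ).opNorm_le_bound (norm_nonneg _) fun f => by
    simpa [phaseConj] using M.le_opNorm (T.phase θ f)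

def phaseAverage (M : ℓ²(V) →L[ℂ] ℓ²(V)) {q : ℝ → ℂ} (hq : Continuous q) :
    ℓ²(V) →L[ℂ] ℓ²(V) :=
  ContinuousLinearMap.strongIntervalIntegral (fun θ => ((2 * π : ℂ)⁻¹ * q θ) • T.phaseConj M θ)
    (fun f => (continuous_const.mul hq).smul (T.continuous_phaseConj_apply M f)) 0 (2 * π)

theorem norm_phaseAverage_le (M : ℓ²(V) →L[ℂ] ℓ²(V)) {q : ℝ → ℂ} (hq : Continuous q) :
    ‖T.phaseAverage M hq‖ ≤ ((2 * π)⁻¹ * ∫ θ in (0 : ℝ)..2 * π, ‖q θ‖) * ‖M‖ := by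
  have hbound : ∀ θ, ‖((2 * π : ℂ)⁻¹ * q θ) • T.phaseConj M θ‖ ≤ (2 * π)⁻¹ * ‖q θ‖ * ‖M‖ :=
    fun θ => by
      rw [norm_smul, norm_mul, norm_inv]
      norm_cast
      rw [Real.norm_of_nonneg Real.two_pi_pos.le]
      gcongr
      exact T.norm_phaseConj_le M θ
  refine (ContinuousLinearMap.norm_strongIntervalIntegral_le _ _ Real.two_pi_pos.le
    (g := fun θ => (2 * π)⁻¹ * ‖q θ‖ * ‖M‖)
    (((continuous_const.mul hq.norm).mul continuous_const).intervalIntegrable _ _)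
    fun θ _ => hbound θ).trans_eq ?_
  rw [intervalIntegral.integral_mul_const, intervalIntegral.integral_const_mul]

end DirTree

theorem Gamma_mul_single (T : DirTree V) (lam : V → ℂ) (ψ φ : ℕ → ℂ) (u v : V) (a : ℂ) :
    Gamma T lam (fun k => ψ k * φ k) (Pi.single u a) v
      = ψ (T.depth v - T.depth u) * Gamma T lam φ (Pi.single u a) v := by
  simp only [Gamma, Finset.mul_sum]
  refine Finset.sum_congr rfl fun k hk => ?_
  by_cases h : T.par^[k] v = u
  · have hk : k ≤ T.depth v := by simpa [Nat.lt_succ_iff] using hk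
    have hdepth := T.depth_iterate_par hk
    rw [h] at hdepth
    rw [show T.depth v - T.depth u = k by omega]
    ring
  · simp [h]

namespace IsMultOp

variable {T : DirTree V} {lam : V → ℝ} {φ : ℕ → ℂ} {M : ℓ²(V) →L[ℂ] ℓ²(V)}

theorem const_smul (hM : IsMultOp T lam φ M) (c : ℂ) :
    IsMultOp T lam (fun k => c * φ k) (c • M) := fun f v => by
  simp only [FunLike.coe_smul, Pi.smul_apply, lp.coeFn_smul, smul_eq_mul, hM f v,
    Gamma, Finset.mul_sum]
  exact Finset.sum_congr rfl fun k _ => by ring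

theorem phaseConj (hM : IsMultOp T lam φ M) (θ : ℝ) :
    IsMultOp T lam (fun k => exp (θ * I) ^ (-(k : ℤ)) * φ k) (T.phaseConj M θ) := fun f v => by
  have hexp : exp (↑(-θ) * I) = (exp (θ * I))⁻¹ := by rw [← exp_neg]; push_cast; ring_nf
  simp only [DirTree.phaseConj, ContinuousLinearMap.comp_apply,
    LinearIsometry.coe_toContinuousLinearMap, DirTree.phase_apply, hM _ v, Gamma, Finset.mul_sum,
    hexp]
  refine Finset.sum_congr rfl fun k hk => ?_
  have hk : k ≤ T.depth v := by simpa [Nat.lt_succ_iff] using hk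
  rw [T.depth_iterate_par hk, zpow_neg, zpow_natCast, inv_pow,
    ← pow_sub_mul_pow (exp (θ * I)) hk]
  field_simp [exp_ne_zero]

theorem strongIntervalIntegral {A : ℝ → ℓ²(V) →L[ℂ] ℓ²(V)} (hA : ∀ f, Continuous fun t => A t f)
    {ψ : ℝ → ℕ → ℂ} (hAψ : ∀ t, IsMultOp T lam (ψ t) (A t)) {a b : ℝ}
    (hψ : ∀ k, IntervalIntegrable (fun t => ψ t k) MeasureTheory.volume a b) :
    IsMultOp T lam (fun k => ∫ t in a..b, ψ t k)
      (ContinuousLinearMap.strongIntervalIntegral A hA a b) := fun f v => by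
  change lp.evalCLM ℂ (fun _ : V => ℂ) 2 v (∫ t in a..b, A t f) = _
  rw [← ContinuousLinearMap.intervalIntegral_comp_comm _ ((hA f).intervalIntegrable a b)]
  change ∫ t in a..b, A t f v = _
  simp only [hAψ _ f v, Gamma]
  rw [intervalIntegral.integral_finsetSum fun k _ => ((hψ k).const_mul _).mul_const _]
  simp only [intervalIntegral.integral_mul_const, intervalIntegral.integral_const_mul]

theorem phaseAverage (hM : IsMultOp T lam φ M) {q : ℝ → ℂ} (hq : Continuous q) :
    IsMultOp T lam
      (fun k => ((2 * π : ℂ)⁻¹ * ∫ θ in (0 : ℝ)..2 * π, q θ * exp (θ * I) ^ (-(k : ℤ))) * φ k)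
      (T.phaseAverage M hq) := by
  have hsymbol : ∀ k : ℕ, ∫ θ in (0 : ℝ)..2 * π,
      (2 * π : ℂ)⁻¹ * q θ * (exp (θ * I) ^ (-(k : ℤ)) * φ k)
        = ((2 * π : ℂ)⁻¹ * ∫ θ in (0 : ℝ)..2 * π, q θ * exp (θ * I) ^ (-(k : ℤ))) * φ k := by
    intro k
    rw [← intervalIntegral.integral_const_mul, ← intervalIntegral.integral_mul_const]
    exact intervalIntegral.integral_congr fun θ _ => by ring
  simp only [← hsymbol]
  exact IsMultOp.strongIntervalIntegral _
    (fun θ => (hM.phaseConj θ).const_smul ((2 * π : ℂ)⁻¹ * q θ)) fun k =>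
      ((continuous_const.mul hq).mul
        ((continuous_exp_ofReal_mul_I_zpow _).mul continuous_const)).intervalIntegrable _ _

theorem tendsto_apply_single {α : Type*} {l : Filter α} (hM : IsMultOp T lam φ M)
    {Ms : α → ℓ²(V) →L[ℂ] ℓ²(V)} {ψ : α → ℕ → ℂ}
    (hMs : ∀ n, IsMultOp T lam (fun k => ψ n k * φ k) (Ms n)) {C : ℝ}
    (hψC : ∀ n k, ‖ψ n k‖ ≤ C) (hψ : ∀ k, Tendsto (fun n => ψ n k) l (𝓝 1)) (u : V) (a : ℂ) :
    Tendsto (fun n => Ms n (lp.single 2 u a)) l (𝓝 (M (lp.single 2 u a))) := by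
  have hcoord : ∀ n v, (Ms n (lp.single 2 u a) - M (lp.single 2 u a)) v
      = (ψ n (T.depth v - T.depth u) - 1) * M (lp.single 2 u a) v := fun n v => by
    rw [lp.coeFn_sub, Pi.sub_apply, hMs, hM, lp.coeFn_single, Gamma_mul_single]
    ring
  refine tendsto_sub_nhds_zero_iff.1 <| lp.tendsto_zero_of_dominated (by norm_num)
    ((lp.memℓp (M (lp.single 2 u a))).norm.const_mul (C + 1)) (fun n v => ?_) fun v => ?_
  · rw [hcoord, norm_mul]
    gcongr
    exact (norm_sub_le _ _).trans (by simpa using hψC n _)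
  · simp only [hcoord]
    simpa using ((hψ _).sub_const 1).mul_const (M (lp.single 2 u a) v)

end IsMultOp

theorem stmt3_general (T : DirTree V)
    (lam : V → ℝ)
    (φ : ℕ → ℂ)
    (M : lp (fun _ : V => ℂ) 2 →L[ℂ] lp (fun _ : V => ℂ) 2) (hM : IsMultOp T lam φ M)
    (N : ℕ → ℕ) (c : ℕ → ℤ → ℂ)
    (p : ℕ → ℂ → ℂ)
    (hp : ∀ n : ℕ, ∀ z : ℂ, z ≠ 0 →
      p n z = ∑ k ∈ Finset.Icc (-(N n : ℤ)) (N n : ℤ), c n k * z ^ k)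
    (phat : ℕ → ℕ → ℂ)
    (hphat : ∀ n k : ℕ, phat n k = if (k : ℤ) ≤ (N n : ℤ) then c n (k : ℤ) else 0)
    (ha : ∃ α : ℝ, ∀ n k : ℕ, ‖phat n k‖ ≤ α)
    (hb : ∀ k : ℕ, Filter.Tendsto (fun n => phat n k) Filter.atTop (nhds 1))
    (β : ℝ)
    (hβ : ∀ n : ℕ,
      (2 * Real.pi)⁻¹ * ∫ θ in (0:ℝ)..(2 * Real.pi),
          ‖p n (Complex.exp (θ * Complex.I))‖ ≤ β) :
    ∃ Ms : ℕ → (lp (fun _ : V => ℂ) 2 →L[ℂ] lp (fun _ : V => ℂ) 2),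
      (∀ n : ℕ, IsMultOp T lam (fun k => phat n k * φ k) (Ms n)) ∧
      (∀ n : ℕ, ‖Ms n‖ ≤ β * ‖M‖) ∧
      (∀ f : lp (fun _ : V => ℂ) 2,
        Filter.Tendsto (fun n => Ms n f) Filter.atTop (nhds (M f))) := by
  have hq : ∀ n, (fun θ : ℝ => p n (exp (θ * I)))
      = trigPoly (Finset.Icc (-(N n : ℤ)) (N n)) (c n) :=
    fun n => funext fun θ => hp n _ (exp_ne_zero _)
  have hqc : ∀ n, Continuous fun θ : ℝ => p n (exp (θ * I)) :=
    fun n => hq n ▸ continuous_trigPoly _ _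
  have hcoeff : ∀ n k : ℕ,
      (2 * π : ℂ)⁻¹ * ∫ θ in (0 : ℝ)..2 * π, p n (exp (θ * I)) * exp (θ * I) ^ (-(k : ℤ))
        = phat n k := fun n k => by
    have h := inv_two_pi_mul_integral_trigPoly_mul_zpow (Finset.Icc (-(N n : ℤ)) (N n)) (c n) k
    rw [← hq n] at h
    have hmem : (k : ℤ) ∈ Finset.Icc (-(N n : ℤ)) (N n) ↔ (k : ℤ) ≤ N n := by
      simp only [Finset.mem_Icc]
      omega
    rw [hphat, ← if_congr hmem rfl rfl, ← h]
  have hMs : ∀ n, IsMultOp T lam (fun k => phat n k * φ k) (T.phaseAverage M (hqc n)) :=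
    fun n => by simpa only [hcoeff] using hM.phaseAverage (hqc n)
  have hnorm : ∀ n, ‖T.phaseAverage M (hqc n)‖ ≤ β * ‖M‖ := fun n =>
    (T.norm_phaseAverage_le M (hqc n)).trans (mul_le_mul_of_nonneg_right (hβ n) (norm_nonneg M))
  obtain ⟨α, hα⟩ := ha
  exact ⟨_, hMs, hnorm, lp.tendsto_apply_of_tendsto_single (by norm_num) ⟨_, hnorm⟩
    fun u a => hM.tendsto_apply_single hMs hα hb u a⟩

/-- Lemma: polynomial approximation within `𝓜(λ)` via a sequence of
trigonometric polynomials `p_n(z) = ∑_{k=-N_n}^{N_n} c_{n,k} z^k` whose coefficients are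
uniformly bounded, converge to `1` pointwise, and whose `L¹(𝕋)`-norms are bounded by `β`. -/
theorem stmt3 [Countable V] [Infinite V] (T : DirTree V) (hTl : T.Leafless)
    (lam : V → ℝ) (hlam : ∀ v, v ≠ T.root → 0 < lam v)
    (S : lp (fun _ : V => ℂ) 2 →L[ℂ] lp (fun _ : V => ℂ) 2) (hS : IsShift T lam S)
    (φ : ℕ → ℂ)
    (M : lp (fun _ : V => ℂ) 2 →L[ℂ] lp (fun _ : V => ℂ) 2) (hM : IsMultOp T lam φ M)
    (N : ℕ → ℕ) (c : ℕ → ℤ → ℂ)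
    (p : ℕ → ℂ → ℂ)
    (hp : ∀ n : ℕ, ∀ z : ℂ, z ≠ 0 →
      p n z = ∑ k ∈ Finset.Icc (-(N n : ℤ)) (N n : ℤ), c n k * z ^ k)
    (phat : ℕ → ℕ → ℂ)
    (hphat : ∀ n k : ℕ, phat n k = if (k : ℤ) ≤ (N n : ℤ) then c n (k : ℤ) else 0)
    (ha : ∃ α : ℝ, ∀ n k : ℕ, ‖phat n k‖ ≤ α)
    (hb : ∀ k : ℕ, Filter.Tendsto (fun n => phat n k) Filter.atTop (nhds 1))
    (β : ℝ)
    (hβ : ∀ n : ℕ,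
      (2 * Real.pi)⁻¹ * ∫ θ in (0:ℝ)..(2 * Real.pi),
          ‖p n (Complex.exp (θ * Complex.I))‖ ≤ β) :
    ∃ Ms : ℕ → (lp (fun _ : V => ℂ) 2 →L[ℂ] lp (fun _ : V => ℂ) 2),
      (∀ n : ℕ, IsMultOp T lam (fun k => phat n k * φ k) (Ms n)) ∧
      (∀ n : ℕ, ‖Ms n‖ ≤ β * ‖M‖) ∧
      (∀ f : lp (fun _ : V => ℂ) 2,
        Filter.Tendsto (fun n => Ms n f) Filter.atTop (nhds (M f))) :=
  stmt3_general T lam φ M hM N c p hp phat hphat ha hb β hβ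
end
end

section
/- If A ∈ Alg Lat ℳ(λ), then for every path 𝒫 = (V_𝒫, E_𝒫) of 𝒯 the subspace ℓ²(V_𝒫) (functions in ℓ²(V) vanishing off V_𝒫) is invariant under the adjoint A*. -/
open Filter Finset Classical

set_option linter.unusedVariables false
open scoped ComplexConjugate ENNReal

noncomputable section
attribute [local instance] Classical.propDecidable

variable {V : Type*}

/-- `P` is (the vertex set of) a path in the tree: a subtree containing the root in which
every vertex has exactly one child. -/
def DirTree.IsPath (T : DirTree V) (P : Set V) : Prop :=
  T.root ∈ P ∧ (∀ v ∈ P, v ≠ T.root → T.par v ∈ P) ∧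
    ∀ v ∈ P, ∃! u : V, u ∈ P ∧ u ≠ T.root ∧ T.par u = v

/-!
Since `P` contains the ancestors of each of its vertices, every multiplication operator `M_φ`
leaves the closed subspace of functions vanishing on `P` invariant, hence so does `A`.
The orthogonal complement of that subspace is `ℓ²(P)`, which is therefore invariant under `A*`.
-/

namespace lp

variable {α 𝕜 : Type*} {E : α → Type*}

section VanishingOn

variable [NormedRing 𝕜] [∀ i, NormedAddCommGroup (E i)] [∀ i, Module 𝕜 (E i)]
  [∀ i, IsBoundedSMul 𝕜 (E i)]

variable (𝕜 E) in
def vanishingOn (p : ℝ≥0∞) (s : Set α) : Submodule 𝕜 (lp E p) :=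
  ⨅ i ∈ s, LinearMap.ker (evalₗ E p i)

theorem mem_vanishingOn {p : ℝ≥0∞} {s : Set α} {f : lp E p} :
    f ∈ vanishingOn 𝕜 E p s ↔ ∀ i ∈ s, f i = 0 := by
  simp [vanishingOn]

theorem isClosed_vanishingOn (p : ℝ≥0∞) [Fact (1 ≤ p)] (s : Set α) :
    IsClosed (vanishingOn 𝕜 E p s : Set (lp E p)) := by
  have hs : (vanishingOn 𝕜 E p s : Set (lp E p)) = ⋂ i ∈ s, ((evalCLM 𝕜 E p i).ker : Set _) := by
    ext f
    simp [mem_vanishingOn, evalCLM]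
  rw [hs]
  exact isClosed_biInter fun i _ => (evalCLM 𝕜 E p i).isClosed_ker

end VanishingOn

variable [RCLike 𝕜] [∀ i, NormedAddCommGroup (E i)] [∀ i, InnerProductSpace 𝕜 (E i)]

theorem orthogonal_vanishingOn (s : Set α) :
    (vanishingOn 𝕜 E 2 s)ᗮ = vanishingOn 𝕜 E 2 sᶜ := by
  ext g
  rw [Submodule.mem_orthogonal, mem_vanishingOn]
  constructor
  · intro hg i hi
    have hsingle : lp.single 2 i (g i) ∈ vanishingOn 𝕜 E 2 s := mem_vanishingOn.2 fun j hj =>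
      lp.single_apply_ne 2 i (g i) (fun hji => hi (hji ▸ hj))
    simpa [inner_single_left] using hg _ hsingle
  · intro hg f hf
    rw [inner_eq_tsum]
    refine (tsum_congr fun i => ?_).trans tsum_zero
    by_cases hi : i ∈ s
    · simp [mem_vanishingOn.1 hf i hi]
    · simp [hg i hi]

end lp

theorem DirTree.iterate_par_mem (T : DirTree V) {P : Set V} (hroot : T.root ∈ P)
    (hpar : ∀ v ∈ P, v ≠ T.root → T.par v ∈ P) (k : ℕ) {v : V} (hv : v ∈ P) :
    T.par^[k] v ∈ P := by
  induction k with
  | zero => exact hv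
  | succ k ih =>
    rw [Function.iterate_succ_apply']
    by_cases hk : T.par^[k] v = T.root
    · rwa [hk, T.par_root]
    · exact hpar _ ih hk

/-- `(M_φ f)(v)` only involves the values of `f` at the ancestors of `v`. -/
theorem IsMultOp.map_mem_vanishingOn {T : DirTree V} {lam : V → ℝ} {φ : ℕ → ℂ}
    {M : lp (fun _ : V => ℂ) 2 →L[ℂ] lp (fun _ : V => ℂ) 2} (hM : IsMultOp T lam φ M)
    {P : Set V} (hroot : T.root ∈ P) (hpar : ∀ v ∈ P, v ≠ T.root → T.par v ∈ P)
    {f : lp (fun _ : V => ℂ) 2} (hf : f ∈ lp.vanishingOn ℂ (fun _ : V => ℂ) 2 P) :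
    M f ∈ lp.vanishingOn ℂ (fun _ : V => ℂ) 2 P := by
  refine lp.mem_vanishingOn.2 fun v hv => ?_
  rw [hM f v, Gamma]
  refine Finset.sum_eq_zero fun k _ => ?_
  rw [lp.mem_vanishingOn.1 hf _ (T.iterate_par_mem hroot hpar k hv), mul_zero]

theorem stmt9_general (T : DirTree V)
    (lam : V → ℝ)
    (A : lp (fun _ : V => ℂ) 2 →L[ℂ] lp (fun _ : V => ℂ) 2)
    (hA : ∀ K : Submodule ℂ (lp (fun _ : V => ℂ) 2),
      IsClosed (K : Set (lp (fun _ : V => ℂ) 2)) →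
      (∀ φ : ℕ → ℂ, ∀ M : lp (fun _ : V => ℂ) 2 →L[ℂ] lp (fun _ : V => ℂ) 2,
        IsMultOp T lam φ M → ∀ f ∈ K, M f ∈ K) →
      ∀ f ∈ K, A f ∈ K)
    (P : Set V) (hP : T.IsPath P) :
    ∀ f : lp (fun _ : V => ℂ) 2, (∀ v ∉ P, f v = 0) →
      ∀ v ∉ P, ContinuousLinearMap.adjoint A f v = 0 := by
  obtain ⟨hroot, hpar, -⟩ := hP
  have hA_invt : lp.vanishingOn ℂ (fun _ : V => ℂ) 2 P ∈ Module.End.invtSubmodule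
      (ContinuousLinearMap.adjoint (ContinuousLinearMap.adjoint A)).toLinearMap := by
    rw [ContinuousLinearMap.adjoint_adjoint]
    exact hA _ (lp.isClosed_vanishingOn 2 P) fun φ M hM f hf => hM.map_mem_vanishingOn hroot hpar hf
  have hAdj_invt := ContinuousLinearMap.orthogonal_mem_invtSubmodule hA_invt
  rw [lp.orthogonal_vanishingOn] at hAdj_invt
  exact fun f hf => lp.mem_vanishingOn.1 (hAdj_invt (lp.mem_vanishingOn.2 hf))

/-- Lemma (i): if `A ∈ Alg Lat ℳ(λ)`, then for every path `𝒫` the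
subspace `ℓ²(V_𝒫)` is invariant under `A*`. -/
theorem stmt9 [Countable V] [Infinite V] (T : DirTree V) (hTl : T.Leafless)
    (lam : V → ℝ) (hlam : ∀ v, v ≠ T.root → 0 < lam v)
    (S : lp (fun _ : V => ℂ) 2 →L[ℂ] lp (fun _ : V => ℂ) 2) (hS : IsShift T lam S)
    (A : lp (fun _ : V => ℂ) 2 →L[ℂ] lp (fun _ : V => ℂ) 2)
    (hA : ∀ K : Submodule ℂ (lp (fun _ : V => ℂ) 2),
      IsClosed (K : Set (lp (fun _ : V => ℂ) 2)) →
      (∀ φ : ℕ → ℂ, ∀ M : lp (fun _ : V => ℂ) 2 →L[ℂ] lp (fun _ : V => ℂ) 2,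
        IsMultOp T lam φ M → ∀ f ∈ K, M f ∈ K) →
      ∀ f ∈ K, A f ∈ K)
    (P : Set V) (hP : T.IsPath P) :
    ∀ f : lp (fun _ : V => ℂ) 2, (∀ v ∉ P, f v = 0) →
      ∀ v ∉ P, ContinuousLinearMap.adjoint A f v = 0 :=
  stmt9_general T lam A hA P hP
end
end

section
/- Let A ∈ Alg Lat ℳ(λ) and let 𝒫 = (V_𝒫, E_𝒫) be a path of 𝒯 with r₂^𝒫(S_λ) > 0. Then there exists a unique function φ̂_𝒫 : ℕ₀ → ℂ such that the restriction of A* to ℓ²(V_𝒫) equals (M^{λ_𝒫}_{φ̂_𝒫})*, the adjoint of the multiplication operator on ℓ²(V_𝒫) with symbol φ̂_𝒫 relative to the path 𝒫 with weights λ_𝒫 = {λ_v}_{v ∈ V_𝒫∖{root}}. -/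
open Filter Finset Classical

set_option linter.unusedVariables false
open scoped ComplexConjugate ENNReal

noncomputable section
attribute [local instance] Classical.propDecidable

variable {V : Type*}

/-!
Enumerate the path as `root = p₀, p₁, …` and let `w n = λ_{root|pₙ}`. Since `r₂^𝒫(S_λ) ≥ c > 0`,
`cⁿ = O(w n)`, so for `|z| < c` the functional `x ↦ ∑ x(pₙ) zⁿ / w n` is bounded on `ℓ²(V)`. It
turns a multiplication operator `M_φ` into multiplication by `∑ φ k zᵏ`, so its kernel lies in
`Lat ℳ(λ)` and is invariant under `A`; as the functional is `1` at `e_root`, its value at `A x` is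
its value at `A e_root` times its value at `x`. Comparing power series coefficients shows that on
`𝒫` the operator `A` acts as `M_φ` with `φ k = (A e_root)(p_k) / w k`. Hence `Q A`, with `Q` the
projection onto `ℓ²(V_𝒫)`, is this multiplication operator, and its adjoint `A* Q` agrees with `A*`
on `ℓ²(V_𝒫)`.
Conversely any admissible symbol can be read off from `A e_root`, which gives uniqueness.
-/

local notation "𝓗" => lp (fun _ : V => ℂ) 2

section PowerSeries

variable {𝕜 : Type*} [NontriviallyNormedField 𝕜]

def cauchyProduct (a b : ℕ → 𝕜) (n : ℕ) : 𝕜 :=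
  ∑ k ∈ range (n + 1), a k * b (n - k)

lemma cauchyProduct_single_zero_one (a : ℕ → 𝕜) : cauchyProduct a (Pi.single 0 1) = a := by
  funext n
  rw [cauchyProduct, Finset.sum_eq_single n]
  · simp
  · intro k hk hkn
    rw [Pi.single_apply, if_neg (by grind), mul_zero]
  · simp

lemma norm_mul_pow_le_of_bound {a : ℕ → 𝕜} {c K t : ℝ} (h : ∀ n, ‖a n‖ * c ^ n ≤ K)
    (ht : 0 ≤ t) (hc : 0 < c) (n : ℕ) : ‖a n‖ * t ^ n ≤ K * (t / c) ^ n :=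
  calc ‖a n‖ * t ^ n = ‖a n‖ * c ^ n * (t / c) ^ n := by
        rw [div_pow, mul_assoc, mul_div_cancel₀ _ (pow_pos hc n).ne']
    _ ≤ K * (t / c) ^ n := by gcongr; exact h n

lemma summable_norm_mul_pow_of_bound {a : ℕ → 𝕜} {c K t : ℝ} (h : ∀ n, ‖a n‖ * c ^ n ≤ K)
    (ht : 0 ≤ t) (htc : t < c) : Summable fun n => ‖a n‖ * t ^ n := by
  have hc : 0 < c := ht.trans_lt htc
  exact .of_nonneg_of_le (fun n => by positivity) (norm_mul_pow_le_of_bound h ht hc)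
    ((summable_geometric_of_lt_one (div_nonneg ht hc.le) ((div_lt_one hc).2 htc)).mul_left K)

lemma summable_cauchyProduct {a b : ℕ → 𝕜} {t : ℝ} (ht : 0 ≤ t)
    (ha : Summable fun n => ‖a n‖ * t ^ n) (hb : Summable fun n => ‖b n‖ * t ^ n) :
    Summable fun n => ‖cauchyProduct a b n‖ * t ^ n := by
  have hnorm : ∀ {f : ℕ → 𝕜}, Summable (fun n => ‖f n‖ * t ^ n) →
      Summable fun n => ‖‖f n‖ * t ^ n‖ := fun hf => hf.abs
  refine .of_nonneg_of_le (fun n => by positivity) (fun n => ?_)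
    (summable_norm_sum_mul_range_of_summable_norm (hnorm ha) (hnorm hb))
  calc ‖cauchyProduct a b n‖ * t ^ n
      ≤ ∑ k ∈ range (n + 1), ‖a k‖ * t ^ k * (‖b (n - k)‖ * t ^ (n - k)) := by
        refine (mul_le_mul_of_nonneg_right (norm_sum_le _ _) (by positivity)).trans_eq ?_
        rw [Finset.sum_mul]
        refine Finset.sum_congr rfl fun k hk => ?_
        rw [norm_mul, ← pow_mul_pow_sub t (Finset.mem_range_succ_iff.1 hk)]
        ring
    _ ≤ _ := Real.le_norm_self _

variable [CompleteSpace 𝕜]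

lemma summable_mul_pow_of_summable_norm {a : ℕ → 𝕜} {z : 𝕜}
    (ha : Summable fun n => ‖a n‖ * ‖z‖ ^ n) : Summable fun n => a n * z ^ n :=
  .of_norm (by simpa only [norm_mul, norm_pow] using ha)

lemma tsum_mul_pow_mul_tsum_mul_pow {a b : ℕ → 𝕜} {z : 𝕜}
    (ha : Summable fun n => ‖a n‖ * ‖z‖ ^ n) (hb : Summable fun n => ‖b n‖ * ‖z‖ ^ n) :
    (∑' n, a n * z ^ n) * (∑' n, b n * z ^ n) = ∑' n, cauchyProduct a b n * z ^ n := by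
  simp_rw [← norm_pow, ← norm_mul] at ha hb
  rw [tsum_mul_tsum_eq_tsum_sum_range_of_summable_norm ha hb]
  refine tsum_congr fun n => ?_
  rw [cauchyProduct, Finset.sum_mul]
  refine Finset.sum_congr rfl fun k hk => ?_
  rw [← pow_mul_pow_sub z (Finset.mem_range_succ_iff.1 hk)]
  ring

lemma eq_of_tsum_mul_pow_eq {a b : ℕ → 𝕜} {r : ℝ} (hr : 0 < r)
    (ha : Summable fun n => ‖a n‖ * r ^ n) (hb : Summable fun n => ‖b n‖ * r ^ n)
    (h : ∀ z : 𝕜, ‖z‖ < r → ∑' n, a n * z ^ n = ∑' n, b n * z ^ n) : a = b := by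
  set pa := FormalMultilinearSeries.ofScalars 𝕜 a
  set pb := FormalMultilinearSeries.ofScalars 𝕜 b
  have hr' : (0 : ENNReal) < r.toNNReal := by simpa using hr
  have hra : (r.toNNReal : ENNReal) ≤ pa.radius :=
    pa.le_radius_of_summable_norm (by simpa [pa, hr.le] using ha)
  have hrb : (r.toNNReal : ENNReal) ≤ pb.radius :=
    pb.le_radius_of_summable_norm (by simpa [pb, hr.le] using hb)
  have hsum : pa.sum =ᶠ[nhds 0] pb.sum := by
    filter_upwards [Metric.ball_mem_nhds (0 : 𝕜) hr] with z hz
    change FormalMultilinearSeries.ofScalarsSum a z = FormalMultilinearSeries.ofScalarsSum b z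
    simpa [FormalMultilinearSeries.ofScalars_sum_eq] using h z (by simpa using hz)
  have hpa := (pa.hasFPowerSeriesOnBall (hr'.trans_le hra)).hasFPowerSeriesAt
  have hpb := (pb.hasFPowerSeriesOnBall (hr'.trans_le hrb)).hasFPowerSeriesAt
  exact FormalMultilinearSeries.ofScalars_series_injective 𝕜 𝕜
    (hpa.eq_formalMultilinearSeries_of_eventually hpb hsum)

end PowerSeries

lemma wProd_add (T : DirTree V) (lam : V → ℂ) (v : V) (k m : ℕ) :
    wProd T lam v (k + m) = wProd T lam v k * wProd T lam (T.par^[k] v) m := by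
  simp only [wProd, Finset.prod_range_add, ← Function.iterate_add_apply, add_comm]

namespace DirTree

variable (T : DirTree V) (P : Set V)

def pathVertex : ℕ → V
  | 0 => T.root
  | n + 1 => @Classical.epsilon _ ⟨T.root⟩ fun u => u ∈ P ∧ u ≠ T.root ∧ T.par u = pathVertex n

variable {T P}

lemma pathVertex_mem (hP : T.IsPath P) : ∀ n, T.pathVertex P n ∈ P
  | 0 => hP.1
  | n + 1 => (Classical.epsilon_spec (hP.2.2 _ (pathVertex_mem hP n)).exists).1

lemma pathVertex_succ_spec (hP : T.IsPath P) (n : ℕ) :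
    T.pathVertex P (n + 1) ≠ T.root ∧ T.par (T.pathVertex P (n + 1)) = T.pathVertex P n :=
  (Classical.epsilon_spec (hP.2.2 _ (pathVertex_mem hP n)).exists).2

lemma depth_pathVertex (hP : T.IsPath P) : ∀ n, T.depth (T.pathVertex P n) = n
  | 0 => (T.depth_eq_zero _).2 rfl
  | n + 1 => by
    obtain ⟨hne, hpar⟩ := pathVertex_succ_spec hP n
    have := T.depth_par _ hne
    rw [hpar, depth_pathVertex hP n] at this
    omega

lemma pathVertex_ne_root (hP : T.IsPath P) {n : ℕ} (hn : n ≠ 0) : T.pathVertex P n ≠ T.root := by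
  intro h
  have := depth_pathVertex hP n
  rw [h, (T.depth_eq_zero _).2 rfl] at this
  exact hn this.symm

lemma iterate_par_pathVertex (hP : T.IsPath P) {k n : ℕ} (hk : k ≤ n) :
    T.par^[k] (T.pathVertex P n) = T.pathVertex P (n - k) := by
  induction k generalizing n with
  | zero => rfl
  | succ k ih =>
    obtain ⟨m, rfl⟩ := Nat.exists_eq_add_of_le' (Nat.one_le_of_lt hk)
    rw [Function.iterate_succ_apply, (pathVertex_succ_spec hP m).2, ih (by omega)]
    congr 1
    omega

lemma pathVertex_depth (hP : T.IsPath P) {v : V} (hv : v ∈ P) :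
    T.pathVertex P (T.depth v) = v := by
  induction h : T.depth v generalizing v with
  | zero => exact ((T.depth_eq_zero v).1 h).symm
  | succ n ih =>
    have hne : v ≠ T.root := fun hr => by simp [hr, (T.depth_eq_zero _).2] at h
    have hpar : T.pathVertex P n = T.par v :=
      ih (hP.2.1 v hv hne) (by have := T.depth_par v hne; omega)
    obtain ⟨hne', hpar'⟩ := pathVertex_succ_spec hP n
    exact (hP.2.2 _ (pathVertex_mem hP n)).unique
      ⟨pathVertex_mem hP _, hne', hpar'⟩ ⟨hv, hne, hpar.symm⟩

end DirTree

def MemAlgLat (T : DirTree V) (lam : V → ℝ) (A : 𝓗 →L[ℂ] 𝓗) : Prop :=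
  ∀ K : Submodule ℂ 𝓗, IsClosed (K : Set 𝓗) →
    (∀ φ : ℕ → ℂ, ∀ M : 𝓗 →L[ℂ] 𝓗, IsMultOp T lam φ M → ∀ f ∈ K, M f ∈ K) → ∀ f ∈ K, A f ∈ K

section PathCoeff

open DirTree

variable {T : DirTree V} {P : Set V} {lam : V → ℝ}

variable (T P lam) in
def pathWeight (n : ℕ) : ℝ :=
  ∏ i ∈ range n, lam (T.par^[i] (T.pathVertex P n))

lemma pathWeight_zero : pathWeight T P lam 0 = 1 := Finset.prod_range_zero _

lemma pathWeight_pos (hP : T.IsPath P) (hlam : ∀ v, v ≠ T.root → 0 < lam v) (n : ℕ) :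
    0 < pathWeight T P lam n :=
  Finset.prod_pos fun i hi => hlam _ <| by
    rw [iterate_par_pathVertex hP (Finset.mem_range.1 hi).le]
    exact pathVertex_ne_root hP (by have := Finset.mem_range.1 hi; omega)

lemma ofReal_pathWeight_ne_zero (hP : T.IsPath P) (hlam : ∀ v, v ≠ T.root → 0 < lam v)
    (n : ℕ) : (pathWeight T P lam n : ℂ) ≠ 0 :=
  Complex.ofReal_ne_zero.2 (pathWeight_pos hP hlam n).ne'

lemma wProd_pathVertex_mul_pathWeight (hP : T.IsPath P) {k n : ℕ} (hk : k ≤ n) :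
    wProd T (fun u => (lam u : ℂ)) (T.pathVertex P n) k * pathWeight T P lam (n - k)
      = pathWeight T P lam n := by
  have hw : ∀ m, (pathWeight T P lam m : ℂ) = wProd T (fun u => (lam u : ℂ)) (T.pathVertex P m) m :=
    fun m => by simp [pathWeight, wProd]
  rw [hw, hw, ← iterate_par_pathVertex hP hk, ← wProd_add, Nat.add_sub_cancel' hk]

variable (T P lam) in
def pathCoeff (g : V → ℂ) (n : ℕ) : ℂ :=
  g (T.pathVertex P n) / pathWeight T P lam n

lemma pathCoeff_indicator (hP : T.IsPath P) (g : V → ℂ) :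
    pathCoeff T P lam (P.indicator g) = pathCoeff T P lam g := by
  funext n
  rw [pathCoeff, pathCoeff, Set.indicator_of_mem (pathVertex_mem hP n)]

lemma pathCoeff_single_root (hP : T.IsPath P) :
    pathCoeff T P lam (lp.single 2 T.root 1 : 𝓗) = Pi.single 0 1 := by
  funext n
  rcases eq_or_ne n 0 with rfl | hn
  · simp [pathCoeff, pathWeight_zero, DirTree.pathVertex]
  · simp [pathCoeff, hn, pathVertex_ne_root hP hn]

lemma pathCoeff_gamma (hP : T.IsPath P) (hlam : ∀ v, v ≠ T.root → 0 < lam v) (φ : ℕ → ℂ)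
    (g : V → ℂ) :
    pathCoeff T P lam (Gamma T (fun u => (lam u : ℂ)) φ g)
      = cauchyProduct φ (pathCoeff T P lam g) := by
  funext n
  rw [pathCoeff, Gamma, depth_pathVertex hP, cauchyProduct, Finset.sum_div]
  refine Finset.sum_congr rfl fun k hk => ?_
  have hkn := Finset.mem_range_succ_iff.1 hk
  have hwProd := wProd_pathVertex_mul_pathWeight (lam := lam) hP hkn
  rw [pathCoeff, iterate_par_pathVertex hP hkn, ← hwProd]
  field_simp [left_ne_zero_of_mul (hwProd.trans_ne (ofReal_pathWeight_ne_zero hP hlam n))]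

lemma pathCoeff_eq_pathCoeff_iff (hP : T.IsPath P) (hlam : ∀ v, v ≠ T.root → 0 < lam v)
    {g h : V → ℂ} : pathCoeff T P lam g = pathCoeff T P lam h ↔ Set.EqOn g h P := by
  refine ⟨fun hgh v hv => ?_, fun hgh => funext fun n => ?_⟩
  · have := congrFun hgh (T.depth v)
    rwa [pathCoeff, pathCoeff, pathVertex_depth hP hv,
      div_left_inj' (ofReal_pathWeight_ne_zero hP hlam _)] at this
  · rw [pathCoeff, pathCoeff, hgh (pathVertex_mem hP n)]

lemma exists_pow_le_mul_pathWeight (hP : T.IsPath P) (hlam : ∀ v, v ≠ T.root → 0 < lam v)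
    {c : ℝ} (hc : 0 ≤ c) {N : ℕ}
    (hN : ∀ v ∈ P, N ≤ T.depth v →
      c ≤ (∏ n ∈ Finset.range (T.depth v), lam (T.par^[n] v)) ^ ((T.depth v : ℝ)⁻¹)) :
    ∃ C, ∀ n, c ^ n ≤ C * pathWeight T P lam n := by
  have hev : ∀ᶠ n in atTop, c ^ n / pathWeight T P lam n ≤ 1 := by
    filter_upwards [eventually_ge_atTop (max N 1)] with n hn
    have hroot := hN _ (pathVertex_mem hP n) (by rw [depth_pathVertex hP]; omega)
    rw [depth_pathVertex hP] at hroot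
    rw [div_le_one (pathWeight_pos hP hlam n)]
    calc c ^ n ≤ (pathWeight T P lam n ^ (n⁻¹ : ℝ)) ^ n := pow_le_pow_left₀ hc hroot n
      _ = _ := Real.rpow_inv_natCast_pow (pathWeight_pos hP hlam n).le (by omega)
  obtain ⟨C, hC⟩ := (isBoundedUnder_of_eventually_le hev).bddAbove_range
  exact ⟨C, fun n => (div_le_iff₀ (pathWeight_pos hP hlam n)).1 (hC ⟨n, rfl⟩)⟩

variable {c C : ℝ}

lemma norm_pathCoeff_mul_pow_le (hP : T.IsPath P) (hlam : ∀ v, v ≠ T.root → 0 < lam v)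
    (hC : ∀ n, c ^ n ≤ C * pathWeight T P lam n) (x : 𝓗) (n : ℕ) :
    ‖pathCoeff T P lam x n‖ * c ^ n ≤ C * ‖x‖ := by
  have hw := pathWeight_pos hP hlam n
  have hC0 : 0 ≤ C := zero_le_one.trans (by simpa [pathWeight_zero] using hC 0)
  rw [pathCoeff, norm_div, Complex.norm_real, Real.norm_of_nonneg hw.le, div_mul_eq_mul_div,
    div_le_iff₀ hw]
  calc ‖x (T.pathVertex P n)‖ * c ^ n ≤ ‖x (T.pathVertex P n)‖ * (C * pathWeight T P lam n) :=
        mul_le_mul_of_nonneg_left (hC n) (norm_nonneg _)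
    _ ≤ ‖x‖ * (C * pathWeight T P lam n) :=
        mul_le_mul_of_nonneg_right (lp.norm_apply_le_norm two_ne_zero x _) (by positivity)
    _ = C * ‖x‖ * pathWeight T P lam n := by ring

variable (T P lam) in
def pathEval (z : ℂ) (x : 𝓗) : ℂ :=
  ∑' n, pathCoeff T P lam x n * z ^ n

lemma pathCoeff_multOp (hP : T.IsPath P) (hlam : ∀ v, v ≠ T.root → 0 < lam v) {φ : ℕ → ℂ}
    {M : 𝓗 →L[ℂ] 𝓗} (hM : IsMultOp T lam φ M) (x : 𝓗) :
    pathCoeff T P lam (M x) = cauchyProduct φ (pathCoeff T P lam x) := by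
  rw [show ⇑(M x) = _ from funext (hM x), pathCoeff_gamma hP hlam]

lemma pathCoeff_multOp_single_root (hP : T.IsPath P) (hlam : ∀ v, v ≠ T.root → 0 < lam v)
    {φ : ℕ → ℂ} {M : 𝓗 →L[ℂ] 𝓗} (hM : IsMultOp T lam φ M) :
    pathCoeff T P lam (M (lp.single 2 T.root 1)) = φ := by
  rw [pathCoeff_multOp hP hlam hM, pathCoeff_single_root hP, cauchyProduct_single_zero_one]

lemma summable_pathCoeff (hP : T.IsPath P) (hlam : ∀ v, v ≠ T.root → 0 < lam v)
    (hC : ∀ n, c ^ n ≤ C * pathWeight T P lam n) (x : 𝓗) {t : ℝ} (ht : 0 ≤ t) (htc : t < c) :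
    Summable fun n => ‖pathCoeff T P lam x n‖ * t ^ n :=
  summable_norm_mul_pow_of_bound (norm_pathCoeff_mul_pow_le hP hlam hC x) ht htc

lemma pathEval_add (hP : T.IsPath P) (hlam : ∀ v, v ≠ T.root → 0 < lam v)
    (hC : ∀ n, c ^ n ≤ C * pathWeight T P lam n) {z : ℂ} (hz : ‖z‖ < c) (x y : 𝓗) :
    pathEval T P lam z (x + y) = pathEval T P lam z x + pathEval T P lam z y := by
  have hs := fun w => summable_mul_pow_of_summable_norm
    (summable_pathCoeff hP hlam hC w (norm_nonneg z) hz)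
  rw [pathEval, pathEval, pathEval, ← (hs x).tsum_add (hs y)]
  refine tsum_congr fun n => ?_
  simp only [pathCoeff, lp.coeFn_add, Pi.add_apply]
  ring

lemma pathEval_smul (a z : ℂ) (x : 𝓗) :
    pathEval T P lam z (a • x) = a * pathEval T P lam z x := by
  rw [pathEval, pathEval, ← tsum_mul_left]
  refine tsum_congr fun n => ?_
  simp only [pathCoeff, lp.coeFn_smul, Pi.smul_apply, smul_eq_mul]
  ring

lemma norm_pathEval_le (hP : T.IsPath P) (hlam : ∀ v, v ≠ T.root → 0 < lam v)
    (hC : ∀ n, c ^ n ≤ C * pathWeight T P lam n) {z : ℂ} (hz : ‖z‖ < c) (x : 𝓗) :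
    ‖pathEval T P lam z x‖ ≤ C * (1 - ‖z‖ / c)⁻¹ * ‖x‖ := by
  have hc : 0 < c := (norm_nonneg z).trans_lt hz
  have hq : ‖z‖ / c < 1 := (div_lt_one hc).2 hz
  calc ‖pathEval T P lam z x‖ ≤ C * ‖x‖ * (1 - ‖z‖ / c)⁻¹ := by
        refine tsum_of_norm_bounded
          ((hasSum_geometric_of_lt_one (by positivity) hq).mul_left (C * ‖x‖)) fun n => ?_
        rw [norm_mul, norm_pow]
        exact norm_mul_pow_le_of_bound (norm_pathCoeff_mul_pow_le hP hlam hC x) (norm_nonneg z) hc n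
    _ = C * (1 - ‖z‖ / c)⁻¹ * ‖x‖ := by ring

lemma pathEval_multOp (hP : T.IsPath P) (hlam : ∀ v, v ≠ T.root → 0 < lam v)
    (hC : ∀ n, c ^ n ≤ C * pathWeight T P lam n) {z : ℂ} (hz : ‖z‖ < c) {φ : ℕ → ℂ}
    {M : 𝓗 →L[ℂ] 𝓗} (hM : IsMultOp T lam φ M) (x : 𝓗) :
    pathEval T P lam z (M x) = (∑' k, φ k * z ^ k) * pathEval T P lam z x := by
  have hφ := summable_pathCoeff hP hlam hC (M (lp.single 2 T.root 1)) (norm_nonneg z) hz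
  rw [pathCoeff_multOp_single_root hP hlam hM] at hφ
  rw [pathEval, pathEval, pathCoeff_multOp hP hlam hM,
    tsum_mul_pow_mul_tsum_mul_pow hφ (summable_pathCoeff hP hlam hC x (norm_nonneg z) hz)]

lemma pathEval_single_root (hP : T.IsPath P) (z : ℂ) :
    pathEval T P lam z (lp.single 2 T.root 1) = 1 := by
  rw [pathEval, pathCoeff_single_root hP, tsum_eq_single 0 fun n hn => by simp [hn]]
  simp

lemma pathEval_apply_eq_mul (hP : T.IsPath P) (hlam : ∀ v, v ≠ T.root → 0 < lam v)
    (hC : ∀ n, c ^ n ≤ C * pathWeight T P lam n) {A : 𝓗 →L[ℂ] 𝓗} (hA : MemAlgLat T lam A)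
    {z : ℂ} (hz : ‖z‖ < c) (x : 𝓗) :
    pathEval T P lam z (A x)
      = pathEval T P lam z (A (lp.single 2 T.root 1)) * pathEval T P lam z x := by
  let L : 𝓗 →ₗ[ℂ] ℂ :=
    { toFun := pathEval T P lam z
      map_add' := pathEval_add hP hlam hC hz
      map_smul' := fun a y => pathEval_smul a z y }
  have hL : Continuous L :=
    AddMonoidHomClass.continuous_of_bound L _ (norm_pathEval_le hP hlam hC hz)
  have hinv := hA (LinearMap.ker L) (isClosed_singleton.preimage hL) fun φ M hM y hy => by
    rw [LinearMap.mem_ker] at hy ⊢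
    exact (pathEval_multOp hP hlam hC hz hM y).trans
      (by rw [show pathEval T P lam z y = 0 from hy, mul_zero])
  have hmem : x - L x • lp.single 2 T.root 1 ∈ LinearMap.ker L := by
    rw [LinearMap.mem_ker, map_sub, map_smul, show L (lp.single 2 T.root 1) = 1 from
      pathEval_single_root hP z, smul_eq_mul, mul_one, sub_self]
  have := hinv _ hmem
  rw [LinearMap.mem_ker, map_sub, map_smul, map_sub, map_smul, smul_eq_mul, sub_eq_zero] at this
  exact this.trans (mul_comm _ _)

lemma pathCoeff_apply_eq_cauchyProduct (hP : T.IsPath P) (hlam : ∀ v, v ≠ T.root → 0 < lam v)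
    (hc : 0 < c) (hC : ∀ n, c ^ n ≤ C * pathWeight T P lam n) {A : 𝓗 →L[ℂ] 𝓗}
    (hA : MemAlgLat T lam A) (x : 𝓗) :
    pathCoeff T P lam (A x)
      = cauchyProduct (pathCoeff T P lam (A (lp.single 2 T.root 1))) (pathCoeff T P lam x) := by
  have hs := fun y : 𝓗 => summable_pathCoeff hP hlam hC y (half_pos hc).le (half_lt_self hc)
  refine eq_of_tsum_mul_pow_eq (half_pos hc) (hs (A x))
    (summable_cauchyProduct (half_pos hc).le (hs _) (hs x)) fun z hz => ?_
  have hz' : ‖z‖ < c := hz.trans (half_lt_self hc)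
  have hs' := fun y : 𝓗 => summable_pathCoeff hP hlam hC y (norm_nonneg z) hz'
  rw [← tsum_mul_pow_mul_tsum_mul_pow (hs' _) (hs' x)]
  exact pathEval_apply_eq_mul hP hlam hC hA hz' x

lemma indicator_apply_eq_indicator_gamma (hP : T.IsPath P) (hlam : ∀ v, v ≠ T.root → 0 < lam v)
    (hc : 0 < c) (hC : ∀ n, c ^ n ≤ C * pathWeight T P lam n) {A : 𝓗 →L[ℂ] 𝓗}
    (hA : MemAlgLat T lam A) (f : 𝓗) :
    P.indicator (A f) = P.indicator (Gamma T (fun u => (lam u : ℂ))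
      (pathCoeff T P lam (A (lp.single 2 T.root 1))) (P.indicator f)) :=
  Set.indicator_congr <| (pathCoeff_eq_pathCoeff_iff hP hlam).1 <| by
    rw [pathCoeff_gamma hP hlam, pathCoeff_indicator hP,
      pathCoeff_apply_eq_cauchyProduct hP hlam hc hC hA]

lemma eq_pathCoeff_of_apply_eq (hP : T.IsPath P) (hlam : ∀ v, v ≠ T.root → 0 < lam v)
    {φ : ℕ → ℂ} {M : 𝓗 →L[ℂ] 𝓗}
    (hM : ∀ f : 𝓗, ∀ v, M f v = P.indicator (Gamma T (fun u => (lam u : ℂ)) φ (P.indicator f)) v) :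
    φ = pathCoeff T P lam (M (lp.single 2 T.root 1)) := by
  rw [show ⇑(M (lp.single 2 T.root 1)) = _ from funext (hM _), pathCoeff_indicator hP,
    pathCoeff_gamma hP hlam, pathCoeff_indicator hP, pathCoeff_single_root hP,
    cauchyProduct_single_zero_one]

end PathCoeff

section Indicator

variable (P : Set V)

def indicatorCLM : 𝓗 →L[ℂ] 𝓗 :=
  LinearMap.mkContinuous
    { toFun := fun x => ⟨P.indicator x, (lp.memℓp x).mono' fun v => norm_indicator_le_norm_self _ _⟩
      map_add' := fun x y => lp.ext <| Set.indicator_add P x y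
      map_smul' := fun a x => lp.ext <| Set.indicator_const_smul P a x }
    1 fun x => by
      rw [one_mul]
      exact lp.norm_mono two_ne_zero fun v => norm_indicator_le_norm_self _ _

lemma indicatorCLM_apply (x : 𝓗) : ⇑(indicatorCLM P x) = P.indicator x := rfl

variable {P}

lemma indicatorCLM_apply_of_forall_notMem {x : 𝓗} (hx : ∀ v ∉ P, x v = 0) :
    indicatorCLM P x = x :=
  lp.ext <| Set.indicator_eq_self.2 fun v hv => by_contra fun h => hv (hx v h)

lemma adjoint_indicatorCLM : ContinuousLinearMap.adjoint (indicatorCLM P) = indicatorCLM P := by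
  refine ((ContinuousLinearMap.eq_adjoint_iff _ _).2 fun x y => ?_).symm
  rw [lp.inner_eq_tsum, lp.inner_eq_tsum]
  refine tsum_congr fun v => ?_
  by_cases hv : v ∈ P <;> simp [indicatorCLM_apply, hv]

lemma apply_eq_of_adjoint_eq {M A : 𝓗 →L[ℂ] 𝓗}
    (h : ∀ f : 𝓗, (∀ v ∉ P, f v = 0) →
      ContinuousLinearMap.adjoint A f = ContinuousLinearMap.adjoint M f)
    (x : 𝓗) {v : V} (hv : v ∈ P) : M x v = A x v := by
  have hf : ∀ w ∉ P, (lp.single 2 v 1 : 𝓗) w = 0 := fun w hw =>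
    lp.single_apply_ne 2 v 1 (ne_of_mem_of_not_mem hv hw).symm
  calc M x v = inner ℂ (lp.single 2 v 1 : 𝓗) (M x) := by simp [lp.inner_single_left]
    _ = inner ℂ (lp.single 2 v 1 : 𝓗) (A x) := by
      rw [← ContinuousLinearMap.adjoint_inner_left, ← ContinuousLinearMap.adjoint_inner_left,
        h _ hf]
    _ = A x v := by simp [lp.inner_single_left]

end Indicator

theorem stmt10_general (T : DirTree V)
    (lam : V → ℝ) (hlam : ∀ v, v ≠ T.root → 0 < lam v)
    (A : lp (fun _ : V => ℂ) 2 →L[ℂ] lp (fun _ : V => ℂ) 2)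
    (hA : ∀ K : Submodule ℂ (lp (fun _ : V => ℂ) 2),
      IsClosed (K : Set (lp (fun _ : V => ℂ) 2)) →
      (∀ φ : ℕ → ℂ, ∀ M : lp (fun _ : V => ℂ) 2 →L[ℂ] lp (fun _ : V => ℂ) 2,
        IsMultOp T lam φ M → ∀ f ∈ K, M f ∈ K) →
      ∀ f ∈ K, A f ∈ K)
    (P : Set V) (hP : T.IsPath P)
    (hr : ∃ c : ℝ, 0 < c ∧ ∃ N : ℕ, ∀ v ∈ P, N ≤ T.depth v →
      c ≤ (∏ n ∈ Finset.range (T.depth v), lam (T.par^[n] v)) ^ ((T.depth v : ℝ)⁻¹)) :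
    ∃! φP : ℕ → ℂ, ∃ MP : lp (fun _ : V => ℂ) 2 →L[ℂ] lp (fun _ : V => ℂ) 2,
      (∀ f : lp (fun _ : V => ℂ) 2, ∀ v : V,
        MP f v = Set.indicator P
          (Gamma T (fun u => (lam u : ℂ)) φP (Set.indicator P (⇑f))) v) ∧
      (∀ f : lp (fun _ : V => ℂ) 2, (∀ v ∉ P, f v = 0) →
        ContinuousLinearMap.adjoint A f = ContinuousLinearMap.adjoint MP f) := by
  obtain ⟨c, hc, N, hN⟩ := hr
  obtain ⟨C, hC⟩ := exists_pow_le_mul_pathWeight hP hlam hc.le hN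
  refine ⟨pathCoeff T P lam (A (lp.single 2 T.root 1)),
    ⟨indicatorCLM P ∘L A, fun f v => ?_, fun f hf => ?_⟩, ?_⟩
  · exact congrFun (indicator_apply_eq_indicator_gamma hP hlam hc hC hA f) v
  · rw [ContinuousLinearMap.adjoint_comp, adjoint_indicatorCLM, ContinuousLinearMap.comp_apply,
      indicatorCLM_apply_of_forall_notMem hf]
  · rintro φ ⟨M, hM, hMA⟩
    rw [eq_pathCoeff_of_apply_eq hP hlam hM]
    exact (pathCoeff_eq_pathCoeff_iff hP hlam).2 fun v hv => apply_eq_of_adjoint_eq hMA _ hv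

/-- Lemma (ii): if `A ∈ Alg Lat ℳ(λ)` and `𝒫` is a path with
`r₂^𝒫(S_λ) > 0`, then there is a unique symbol `φ_𝒫 : ℕ₀ → ℂ` such that
`A*` restricted to `ℓ²(V_𝒫)` equals the adjoint of the multiplication operator
`M^{λ_𝒫}_{φ_𝒫}` relative to the path (extended by `0` on `ℓ²(V_𝒫)^⊥`). -/
theorem stmt10 [Countable V] [Infinite V] (T : DirTree V) (hTl : T.Leafless)
    (lam : V → ℝ) (hlam : ∀ v, v ≠ T.root → 0 < lam v)
    (S : lp (fun _ : V => ℂ) 2 →L[ℂ] lp (fun _ : V => ℂ) 2) (hS : IsShift T lam S)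
    (A : lp (fun _ : V => ℂ) 2 →L[ℂ] lp (fun _ : V => ℂ) 2)
    (hA : ∀ K : Submodule ℂ (lp (fun _ : V => ℂ) 2),
      IsClosed (K : Set (lp (fun _ : V => ℂ) 2)) →
      (∀ φ : ℕ → ℂ, ∀ M : lp (fun _ : V => ℂ) 2 →L[ℂ] lp (fun _ : V => ℂ) 2,
        IsMultOp T lam φ M → ∀ f ∈ K, M f ∈ K) →
      ∀ f ∈ K, A f ∈ K)
    (P : Set V) (hP : T.IsPath P)
    (hr : ∃ c : ℝ, 0 < c ∧ ∃ N : ℕ, ∀ v ∈ P, N ≤ T.depth v →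
      c ≤ (∏ n ∈ Finset.range (T.depth v), lam (T.par^[n] v)) ^ ((T.depth v : ℝ)⁻¹)) :
    ∃! φP : ℕ → ℂ, ∃ MP : lp (fun _ : V => ℂ) 2 →L[ℂ] lp (fun _ : V => ℂ) 2,
      (∀ f : lp (fun _ : V => ℂ) 2, ∀ v : V,
        MP f v = Set.indicator P
          (Gamma T (fun u => (lam u : ℂ)) φP (Set.indicator P (⇑f))) v) ∧
      (∀ f : lp (fun _ : V => ℂ) 2, (∀ v ∉ P, f v = 0) →
        ContinuousLinearMap.adjoint A f = ContinuousLinearMap.adjoint MP f) :=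
  stmt10_general T lam hlam A hA P hP hr
end
end

section
/- Let S_λ be the classical weighted shift on ℓ²(ℕ₀) (i.e., S_λ e_{n} = λ_{n+1} e_{n+1}) with weights λ_1 = 1 and λ_n = n/(n−1) for n ≥ 2. Then S_λ is bounded, ‖S_λⁿ‖ = n+1 for every n ∈ ℕ, the spectral radius of S_λ equals 1, the power series ∑_{k=1}^∞ k^{−3/2} z^k defines a bounded analytic function on the open unit disc, and yet the function φ̂ : ℕ₀ → ℂ given by φ̂(0) = 0 and φ̂(k) = k^{−3/2} for k ≥ 1 does not belong to the multiplier algebra 𝓜(λ); indeed ∑_{k=1}^∞ |k·φ̂(k)|² = ∑_{k=1}^∞ 1/k = ∞, so Γ_φ e_0 ∉ ℓ²(ℕ₀). -/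
/-!
The weights telescope: `λ_{v+1} ⋯ λ_{v+n} = max(v+n, 1) / max(v, 1)`, which is at most `n + 1`,
with equality at `v = 1`. As `S_λⁿ` is the shift by `n` with these products as weights, its norm
is their supremum `n + 1`, and Gelfand's formula gives `r(S_λ) = lim (n+1)^{1/n} = 1`.
The coefficients `k^{-3/2}` are absolutely summable, so their power series is analytic on the
disc and bounded there by `∑ k^{-3/2}`. On the other hand `(Γ_φ e₀)(k) = λ_1 ⋯ λ_k φ(k) = k φ(k)`,
and `|k φ(k)|² = 1/k` is the harmonic series.
-/

open Filter Finset Classical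

set_option linter.unusedVariables false
open scoped ComplexConjugate ENNReal

noncomputable section
attribute [local instance] Classical.propDecidable

variable {V : Type*}

/-- The directed tree `ℕ₀` with edges `n → n+1` (the classical unilateral shift tree). -/
def natTree : DirTree ℕ where
  root := 0
  par n := n - 1
  depth := id
  par_root := rfl
  depth_eq_zero := fun _ => Iff.rfl
  depth_par := fun v hv => Nat.succ_pred_eq_of_pos (Nat.pos_of_ne_zero hv)

/-- The weights `λ₁ = 1`, `λ_n = n/(n-1)` for `n ≥ 2`. -/
def lam12 : ℕ → ℝ := fun n => if n ≤ 1 then 1 else (n : ℝ) / ((n : ℝ) - 1)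

/-- The symbol `φ(0) = 0`, `φ(k) = k^{-3/2}` for `k ≥ 1`. -/
def phi12 : ℕ → ℂ := fun k => if k = 0 then 0 else (((k : ℝ) ^ (-(3/2 : ℝ)) : ℝ) : ℂ)

open scoped Topology

local notation "ℓ²" => lp (fun _ : ℕ => ℂ) 2

section L2

variable {α : Type*} {E : α → Type*} [∀ i, NormedAddCommGroup (E i)]

lemma memℓp_two_iff {f : ∀ i, E i} : Memℓp f 2 ↔ Summable fun i => ‖f i‖ ^ 2 := by
  simp [memℓp_gen_iff (p := 2) (by norm_num)]

lemma lp.norm_sq_eq_tsum (f : lp E 2) : ‖f‖ ^ 2 = ∑' i, ‖f i‖ ^ 2 := by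
  simpa using lp.norm_rpow_eq_tsum (p := 2) (by norm_num) f

end L2

lemma tsum_eq_tsum_nat_add_of_eq_zero {M : Type*} [AddCommMonoid M] [TopologicalSpace M]
    {g : ℕ → M} {n : ℕ} (hg : ∀ v < n, g v = 0) :
    ∑' v, g v = ∑' v, g (v + n) := by
  refine ((add_left_injective n).tsum_eq fun v hv => ?_).symm
  by_contra hv'
  exact hv (hg v (by_contra fun h => hv' ⟨v - n, by simp only; omega⟩))

namespace WeightedShift

section Raw

variable (w : ℕ → ℂ)

def shiftFun (f : ℕ → ℂ) : ℕ → ℂ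
  | 0 => 0
  | v + 1 => w (v + 1) * f v

def weightProd (n v : ℕ) : ℂ := ∏ j ∈ range n, w (v + j + 1)

lemma shiftFun_add (f g : ℕ → ℂ) : shiftFun w (f + g) = shiftFun w f + shiftFun w g := by
  funext v; cases v <;> simp [shiftFun, mul_add]

lemma shiftFun_smul (c : ℂ) (f : ℕ → ℂ) : shiftFun w (c • f) = c • shiftFun w f := by
  funext v; cases v <;> simp [shiftFun, mul_left_comm]

lemma shiftFun_iterate_of_lt (f : ℕ → ℂ) {n v : ℕ} (h : v < n) : (shiftFun w)^[n] f v = 0 := by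
  induction n generalizing v with
  | zero => omega
  | succ n ih =>
    rw [Function.iterate_succ_apply']
    cases v with
    | zero => rfl
    | succ v => simp [shiftFun, ih (by omega : v < n)]

lemma shiftFun_iterate_add (f : ℕ → ℂ) (n v : ℕ) :
    (shiftFun w)^[n] f (v + n) = weightProd w n v * f v := by
  induction n with
  | zero => simp [weightProd]
  | succ n ih =>
    rw [Function.iterate_succ_apply', ← add_assoc, shiftFun, ih, weightProd, weightProd,
      prod_range_succ]
    ring

variable {w}

lemma norm_weightProd_le {C : ℝ} (hw : ∀ v, ‖w v‖ ≤ C) (n v : ℕ) :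
    ‖weightProd w n v‖ ≤ C ^ n := by
  calc ‖weightProd w n v‖ = ∏ j ∈ range n, ‖w (v + j + 1)‖ := norm_prod _ _
    _ ≤ ∏ _j ∈ range n, C := prod_le_prod (fun _ _ => norm_nonneg _) fun j _ => hw _
    _ = C ^ n := by simp

end Raw

section Bounded

variable {w : ℕ → ℂ}

variable {n : ℕ} {C : ℝ} (hC : ∀ v, ‖weightProd w n v‖ ≤ C)
include hC

lemma norm_sq_shiftFun_iterate_add_le (f : ℕ → ℂ) (v : ℕ) :
    ‖(shiftFun w)^[n] f (v + n)‖ ^ 2 ≤ C ^ 2 * ‖f v‖ ^ 2 := by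
  rw [shiftFun_iterate_add, norm_mul, mul_pow]
  gcongr
  exact hC v

lemma memℓp_shiftFun_iterate (f : ℓ²) : Memℓp ((shiftFun w)^[n] ⇑f) 2 := by
  rw [memℓp_two_iff, ← summable_nat_add_iff n]
  exact (memℓp_two_iff.mp f.2).mul_left (C ^ 2) |>.of_nonneg_of_le (fun _ => by positivity)
    (norm_sq_shiftFun_iterate_add_le hC f)

lemma norm_le_of_coe_eq_shiftFun_iterate (h0 : 0 ≤ C) {f g : ℓ²}
    (hg : ⇑g = (shiftFun w)^[n] ⇑f) : ‖g‖ ≤ C * ‖f‖ := by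
  have hf := memℓp_two_iff.mp f.2
  refine le_of_pow_le_pow_left₀ two_ne_zero (by positivity) ?_
  rw [mul_pow, lp.norm_sq_eq_tsum, lp.norm_sq_eq_tsum, hg, ← tsum_mul_left,
    tsum_eq_tsum_nat_add_of_eq_zero fun v (hv : v < n) => by
      rw [shiftFun_iterate_of_lt w _ hv, norm_zero, zero_pow two_ne_zero]]
  refine Summable.tsum_le_tsum (norm_sq_shiftFun_iterate_add_le hC f) ?_ (hf.mul_left _)
  exact (summable_nat_add_iff n).mpr (memℓp_two_iff.mp (memℓp_shiftFun_iterate hC f))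

end Bounded

section Operator

variable {w : ℕ → ℂ} {C : ℝ} (hw : ∀ v, ‖w v‖ ≤ C)

def shift : ℓ² →L[ℂ] ℓ² :=
  LinearMap.mkContinuous
    { toFun := fun f => ⟨shiftFun w f, show Memℓp (shiftFun w f) 2 by
        simpa using memℓp_shiftFun_iterate (n := 1) (norm_weightProd_le hw 1) f⟩
      map_add' := fun f g => lp.ext (shiftFun_add w f g)
      map_smul' := fun c f => lp.ext (shiftFun_smul w c f) }
    (C ^ 1) fun f => norm_le_of_coe_eq_shiftFun_iterate (n := 1) (norm_weightProd_le hw 1)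
      (pow_nonneg ((norm_nonneg _).trans (hw 0)) 1) (by simp)

lemma coe_shift_apply (f : ℓ²) : ⇑(shift hw f) = shiftFun w ⇑f := rfl

lemma coe_shift_pow_apply (n : ℕ) (f : ℓ²) : ⇑((shift hw ^ n) f) = (shiftFun w)^[n] ⇑f := by
  induction n generalizing f with
  | zero => rfl
  | succ n ih =>
    rw [pow_succ, Function.iterate_succ_apply]
    exact ih (shift hw f)

lemma norm_shift_pow_le {n : ℕ} {C' : ℝ} (h0 : 0 ≤ C') (h : ∀ v, ‖weightProd w n v‖ ≤ C') :
    ‖shift hw ^ n‖ ≤ C' :=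
  ContinuousLinearMap.opNorm_le_bound _ h0 fun f =>
    norm_le_of_coe_eq_shiftFun_iterate h h0 (coe_shift_pow_apply hw n f)

lemma norm_weightProd_le_norm_shift_pow (n v : ℕ) : ‖weightProd w n v‖ ≤ ‖shift hw ^ n‖ := by
  let e : ℓ² := lp.single 2 v 1
  calc ‖weightProd w n v‖ = ‖(shift hw ^ n) e (v + n)‖ := by
        rw [coe_shift_pow_apply, shiftFun_iterate_add]; simp [e]
    _ ≤ ‖(shift hw ^ n) e‖ := lp.norm_apply_le_norm two_ne_zero _ _
    _ ≤ ‖shift hw ^ n‖ * ‖e‖ := (shift hw ^ n).le_opNorm e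
    _ = ‖shift hw ^ n‖ := by rw [lp.norm_single (by norm_num), norm_one, mul_one]

end Operator

end WeightedShift

lemma tendsto_natCast_add_one_rpow_one_div :
    Tendsto (fun n : ℕ => ((n : ℝ) + 1) ^ (1 / (n : ℝ))) atTop (𝓝 1) := by
  have h := (tendsto_rpow_div_mul_add 1 1 (-1) one_ne_zero.symm).comp
    (tendsto_atTop_add_const_right _ 1 tendsto_natCast_atTop_atTop)
  refine h.congr fun n => ?_
  simp

lemma spectralRadius_eq_one_of_norm_pow_eq {A : Type*} [NormedRing A] [NormedAlgebra ℂ A]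
    [CompleteSpace A] {a : A} (h : ∀ n : ℕ, 1 ≤ n → ‖a ^ n‖ = n + 1) :
    spectralRadius ℂ a = 1 := by
  refine tendsto_nhds_unique (spectrum.pow_nnnorm_pow_one_div_tendsto_nhds_spectralRadius a) ?_
  have h1 := ENNReal.tendsto_ofReal tendsto_natCast_add_one_rpow_one_div
  rw [ENNReal.ofReal_one] at h1
  refine h1.congr' ?_
  filter_upwards [eventually_ge_atTop 1] with n hn
  rw [← ENNReal.ofReal_coe_nnreal, coe_nnnorm, h n hn,
    ENNReal.ofReal_rpow_of_pos (by positivity)]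

section PowerSeries

variable {a : ℕ → ℂ}

lemma analyticOnNhd_tsum_mul_pow {C : ℝ} (ha : ∀ k, ‖a k‖ ≤ C) :
    AnalyticOnNhd ℂ (fun z : ℂ => ∑' k, a k * z ^ k) (Metric.ball 0 1) := by
  let p := FormalMultilinearSeries.ofScalars ℂ a
  have hp : 1 ≤ p.radius := by
    simpa using p.le_radius_of_bound C (r := 1) fun k => by simpa [p] using ha k
  have hsum : (fun z : ℂ => ∑' k, a k * z ^ k) = p.sum :=
    (FormalMultilinearSeries.ofScalarsSum_eq_tsum a).symm
  rw [hsum]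
  refine ((p.hasFPowerSeriesOnBall (zero_lt_one.trans_le hp)).analyticOnNhd).mono fun z hz => ?_
  rw [Metric.mem_eball, edist_zero_right, ← ofReal_norm]
  exact (ENNReal.ofReal_lt_one.mpr (mem_ball_zero_iff.mp hz)).trans_le hp

lemma norm_tsum_mul_pow_le (ha : Summable fun k => ‖a k‖) {z : ℂ} (hz : ‖z‖ ≤ 1) :
    ‖∑' k, a k * z ^ k‖ ≤ ∑' k, ‖a k‖ :=
  tsum_of_norm_bounded ha.hasSum fun k => by
    rw [norm_mul, norm_pow]
    exact mul_le_of_le_one_right (norm_nonneg _) (pow_le_one₀ (norm_nonneg z) hz)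

end PowerSeries

lemma IsMultOp.memℓp_Gamma {T : DirTree V} {lam : V → ℝ} {φ : ℕ → ℂ}
    {M : lp (fun _ : V => ℂ) 2 →L[ℂ] lp (fun _ : V => ℂ) 2} (hM : IsMultOp T lam φ M)
    (f : lp (fun _ : V => ℂ) 2) : Memℓp (Gamma T (fun u => (lam u : ℂ)) φ ⇑f) 2 :=
  funext (hM f) ▸ (M f).2

lemma natTree_par_iterate (k v : ℕ) : natTree.par^[k] v = v - k := by
  induction k with
  | zero => rfl
  | succ k ih => rw [Function.iterate_succ_apply', ih]; exact Nat.sub_sub v k 1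

open WeightedShift in
lemma Gamma_natTree_indicator_zero (w φ : ℕ → ℂ) (v : ℕ) :
    Gamma natTree w φ (fun n => if n = 0 then 1 else 0) v = weightProd w v 0 * φ v := by
  change ∑ k ∈ range (v + 1), _ = _
  simp only [natTree_par_iterate]
  rw [sum_eq_single_of_mem v (self_mem_range_succ v) fun k hk hkv => by
    rw [if_neg (by rw [mem_range] at hk; omega), mul_zero]]
  rw [Nat.sub_self, if_pos rfl, mul_one, wProd, weightProd,
    ← prod_range_reflect (fun j => w (0 + j + 1))]
  congr 1
  refine prod_congr rfl fun j hj => ?_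
  rw [natTree_par_iterate]
  congr 1
  have := mem_range.mp hj
  omega

lemma lam12_nonneg (n : ℕ) : 0 ≤ lam12 n := by
  unfold lam12
  split_ifs with h
  · exact zero_le_one
  · have : (2 : ℝ) ≤ n := by exact_mod_cast not_le.mp h
    exact div_nonneg (by linarith) (by linarith)

lemma norm_lam12_le_two (n : ℕ) : ‖(lam12 n : ℂ)‖ ≤ 2 := by
  rw [Complex.norm_real, Real.norm_of_nonneg (lam12_nonneg n)]
  unfold lam12
  split_ifs with h
  · norm_num
  · have : (2 : ℝ) ≤ n := by exact_mod_cast not_le.mp h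
    rw [div_le_iff₀ (by linarith)]
    linarith

lemma lam12_succ_mul_max (m : ℕ) : lam12 (m + 1) * max (m : ℝ) 1 = m + 1 := by
  rcases Nat.eq_zero_or_pos m with rfl | hm
  · simp [lam12]
  · have hm' : (1 : ℝ) ≤ m := by exact_mod_cast hm
    rw [lam12, if_neg (by omega), max_eq_left hm']
    push_cast
    rw [add_sub_cancel_right, div_mul_cancel₀ _ (by positivity)]

lemma prod_lam12_mul_max (n v : ℕ) :
    (∏ j ∈ range n, lam12 (v + j + 1)) * max (v : ℝ) 1 = max ((v + n : ℕ) : ℝ) 1 := by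
  induction n with
  | zero => simp
  | succ n ih =>
    rw [prod_range_succ, mul_right_comm, ih, mul_comm, ← add_assoc, lam12_succ_mul_max,
      max_eq_left (by exact_mod_cast Nat.le_add_left 1 (v + n))]
    push_cast
    ring

open WeightedShift

lemma norm_weightProd_lam12 (n v : ℕ) :
    ‖weightProd (fun u => (lam12 u : ℂ)) n v‖ = max ((v + n : ℕ) : ℝ) 1 / max (v : ℝ) 1 := by
  rw [eq_div_iff (by positivity), ← prod_lam12_mul_max, weightProd, ← Complex.ofReal_prod,
    Complex.norm_real, Real.norm_of_nonneg (prod_nonneg fun _ _ => lam12_nonneg _)]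

lemma norm_weightProd_lam12_le (n v : ℕ) :
    ‖weightProd (fun u => (lam12 u : ℂ)) n v‖ ≤ n + 1 := by
  rw [norm_weightProd_lam12, div_le_iff₀ (by positivity), max_le_iff]
  push_cast
  constructor <;> nlinarith [le_max_left (v : ℝ) 1, le_max_right (v : ℝ) 1]

lemma norm_shift_lam12_pow (n : ℕ) : ‖shift norm_lam12_le_two ^ n‖ = n + 1 := by
  refine le_antisymm (norm_shift_pow_le _ (by positivity) (norm_weightProd_lam12_le n)) ?_
  calc (n : ℝ) + 1 = ‖weightProd (fun u => (lam12 u : ℂ)) n 1‖ := by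
        rw [norm_weightProd_lam12]; push_cast; simp [add_comm]
    _ ≤ ‖shift norm_lam12_le_two ^ n‖ := norm_weightProd_le_norm_shift_pow _ n 1

lemma isShift_shift_lam12 : IsShift natTree lam12 (shift norm_lam12_le_two) := by
  intro f v
  rw [coe_shift_apply]
  cases v with
  | zero => exact (if_pos rfl).symm
  | succ v => exact (if_neg (Nat.succ_ne_zero v)).symm

lemma norm_phi12 (k : ℕ) : ‖phi12 k‖ = (k : ℝ) ^ (-(3 / 2) : ℝ) := by
  rcases eq_or_ne k 0 with rfl | hk
  -- Mathlib's `Real.rpow` has `0 ^ x = 0` for `x ≠ 0`, matching `φ(0) = 0`.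
  · simp [phi12, Real.zero_rpow]
  · rw [phi12, if_neg hk, Complex.norm_real, Real.norm_of_nonneg (by positivity)]

lemma summable_norm_phi12 : Summable fun k => ‖phi12 k‖ := by
  simpa [norm_phi12] using Real.summable_nat_rpow.mpr (by norm_num : (-(3 / 2) : ℝ) < -1)

lemma norm_natCast_mul_phi12_sq (k : ℕ) : ‖(k : ℂ) * phi12 k‖ ^ 2 = 1 / k := by
  rcases Nat.eq_zero_or_pos k with rfl | hk
  · simp
  · have hk' : (0 : ℝ) < k := by exact_mod_cast hk
    have h : ((k : ℝ) ^ (-(3 / 2) : ℝ)) ^ 2 = ((k : ℝ) ^ 3)⁻¹ := by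
      rw [← Real.rpow_natCast _ 2, ← Real.rpow_mul hk'.le,
        show (-(3 / 2) : ℝ) * (2 : ℕ) = -(3 : ℕ) by norm_num, Real.rpow_neg hk'.le,
        Real.rpow_natCast]
    rw [norm_mul, norm_phi12, Complex.norm_natCast, mul_pow, h]
    field_simp

lemma Gamma_lam12_phi12_indicator_zero :
    Gamma natTree (fun n => (lam12 n : ℂ)) phi12 (fun n => if n = 0 then 1 else 0) =
      fun k : ℕ => (k : ℂ) * phi12 k := by
  funext v
  rw [Gamma_natTree_indicator_zero]
  rcases Nat.eq_zero_or_pos v with rfl | hv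
  · simp [phi12]
  · have h := prod_lam12_mul_max v 0
    simp only [Nat.cast_zero, zero_le_one, max_eq_right, mul_one, zero_add] at h
    rw [weightProd, ← Complex.ofReal_prod]
    simp [h, max_eq_left (Nat.one_le_cast.mpr hv)]

/-- Example: for the classical weighted shift with weights
`λ₁ = 1`, `λ_n = n/(n-1)`, one has `‖S_λⁿ‖ = n+1`, `r(S_λ) = 1`, the series
`∑ k^{-3/2} z^k` is a bounded analytic function on the unit disc, and yet its coefficient
sequence `φ` is not a multiplier: `∑_k |k·φ(k)|² = ∑ 1/k = ∞`, so `Γ_φ e₀ ∉ ℓ²`. -/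
theorem stmt12 :
    ∃ S : lp (fun _ : ℕ => ℂ) 2 →L[ℂ] lp (fun _ : ℕ => ℂ) 2,
      IsShift natTree lam12 S ∧
      (∀ n : ℕ, 1 ≤ n → ‖S ^ n‖ = (n : ℝ) + 1) ∧
      spectralRadius ℂ S = 1 ∧
      AnalyticOnNhd ℂ (fun z : ℂ => ∑' k : ℕ, phi12 k * z ^ k) (Metric.ball 0 1) ∧
      (∃ C : ℝ, ∀ z ∈ Metric.ball (0 : ℂ) 1, ‖∑' k : ℕ, phi12 k * z ^ k‖ ≤ C) ∧
      ¬ Summable (fun k : ℕ => ‖(k : ℂ) * phi12 k‖ ^ 2) ∧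
      ¬ Memℓp (Gamma natTree (fun n => (lam12 n : ℂ)) phi12
          (fun n : ℕ => if n = 0 then 1 else 0)) 2 ∧
      ¬ ∃ M : lp (fun _ : ℕ => ℂ) 2 →L[ℂ] lp (fun _ : ℕ => ℂ) 2,
          IsMultOp natTree lam12 phi12 M := by
  have hsum : ¬ Summable fun k : ℕ => ‖(k : ℂ) * phi12 k‖ ^ 2 := by
    simpa only [norm_natCast_mul_phi12_sq] using Real.not_summable_one_div_natCast
  have hΓ : ¬ Memℓp (Gamma natTree (fun n => (lam12 n : ℂ)) phi12
      (fun n : ℕ => if n = 0 then 1 else 0)) 2 := by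
    rwa [Gamma_lam12_phi12_indicator_zero, memℓp_two_iff]
  have he₀ : ⇑(lp.single (E := fun _ : ℕ => ℂ) 2 0 1) = fun n => if n = 0 then 1 else 0 := by
    funext n
    simp [Pi.single_apply]
  refine ⟨shift norm_lam12_le_two, isShift_shift_lam12, fun n _ => norm_shift_lam12_pow n,
    spectralRadius_eq_one_of_norm_pow_eq fun n _ => norm_shift_lam12_pow n,
    analyticOnNhd_tsum_mul_pow fun k => summable_norm_phi12.le_tsum k fun j _ => norm_nonneg _,
    ⟨_, fun z hz => norm_tsum_mul_pow_le summable_norm_phi12 (mem_ball_zero_iff.mp hz).le⟩,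
    hsum, hΓ, ?_⟩
  rintro ⟨M, hM⟩
  exact hΓ (he₀ ▸ hM.memℓp_Gamma _)
end
end

section
/- Let S_λ be a bounded weighted shift on the directed tree 𝒯 with weights λ. If S_λ is bounded from below (i.e., there exists c > 0 with ‖S_λ f‖ ≥ c‖f‖ for all f), then representations with respect to the kernel of the adjoint are unique: if f = ∑_{n=0}^∞ S_λⁿ f_n = ∑_{n=0}^∞ S_λⁿ g_n with all f_n, g_n ∈ ker S_λ* and both series converging in ℓ²(V), then f_n = g_n for every n ∈ ℕ₀. -/
open Filter Finset Classical

set_option linter.unusedVariables false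
open scoped ComplexConjugate ENNReal

noncomputable section
attribute [local instance] Classical.propDecidable

variable {V : Type*}

/-
Passing to `h_n = f_n - g_n`, it suffices that `∑ S^n h_n = 0` with `h_n ∈ ker S*` forces `h_n = 0`.
Since `S^n h_n ⊥ ker S*` for `n ≥ 1`, `h_0` is the orthogonal projection of the sum onto `ker S*`,
so `h_0 = 0`. Then `∑ S^n h_n = S (∑ S^n h_{n+1})`, and a bounded-below `S` is a topological
embedding, so the shifted series also sums to `0`; induct.
-/

open Topology

theorem ContinuousLinearMap.isInducing_of_mul_norm_le {𝕜 E F : Type*} [NormedField 𝕜]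
    [SeminormedAddCommGroup E] [SeminormedAddCommGroup F] [NormedSpace 𝕜 E] [NormedSpace 𝕜 F]
    (S : E →L[𝕜] F) {c : ℝ} (hc : 0 < c) (hS : ∀ x, c * ‖x‖ ≤ ‖S x‖) : IsInducing S := by
  refine ((S.antilipschitz_of_bound (K := c⁻¹.toNNReal) fun x => ?_).isUniformInducing
    S.uniformContinuous).isInducing
  rw [Real.coe_toNNReal _ (inv_nonneg.2 hc.le), inv_mul_eq_div, le_div_iff₀ hc, mul_comm]
  exact hS x

section SeriesOfPowers

variable {R M : Type*} [Semiring R] [AddCommMonoid M] [Module R M] [TopologicalSpace M]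

theorem sum_range_succ_pow_apply (S : M →L[R] M) (h : ℕ → M) (N : ℕ) :
    ∑ n ∈ range (N + 1), (S ^ n) (h n) = h 0 + S (∑ n ∈ range N, (S ^ n) (h (n + 1))) := by
  rw [sum_range_succ', add_comm, map_sum, pow_zero, one_apply_eq_self]
  simp only [pow_succ', mul_apply_eq_comp]

theorem tendsto_sum_pow_apply_succ_of_isInducing {S : M →L[R] M} (hS : IsInducing S)
    {h : ℕ → M} (h0 : h 0 = 0)
    (hsum : Tendsto (fun N => ∑ n ∈ range N, (S ^ n) (h n)) atTop (𝓝 0)) :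
    Tendsto (fun N => ∑ n ∈ range N, (S ^ n) (h (n + 1))) atTop (𝓝 0) := by
  rw [hS.tendsto_nhds_iff, map_zero]
  refine (hsum.comp (tendsto_add_atTop_nat 1)).congr fun N => ?_
  rw [Function.comp_apply, sum_range_succ_pow_apply, h0, zero_add, Function.comp_apply]

end SeriesOfPowers

section KernelOfAdjoint

open scoped InnerProductSpace

variable {𝕜 E : Type*} [RCLike 𝕜] [NormedAddCommGroup E] [InnerProductSpace 𝕜 E] [CompleteSpace E]
  {S : E →L[𝕜] E}

theorem inner_pow_succ_apply_eq_zero {x : E} (hx : S.adjoint x = 0) (n : ℕ) (y : E) :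
    ⟪x, (S ^ (n + 1)) y⟫_𝕜 = 0 := by
  rw [pow_succ', mul_apply_eq_comp, ← ContinuousLinearMap.adjoint_inner_left, hx,
    inner_zero_left]

theorem inner_eq_inner_self_of_tendsto_sum_pow_apply {h : ℕ → E} {f : E}
    (h0 : S.adjoint (h 0) = 0)
    (hsum : Tendsto (fun N => ∑ n ∈ range N, (S ^ n) (h n)) atTop (𝓝 f)) :
    ⟪h 0, f⟫_𝕜 = ⟪h 0, h 0⟫_𝕜 := by
  have hinner : ∀ N, ⟪h 0, ∑ n ∈ range (N + 1), (S ^ n) (h n)⟫_𝕜 = ⟪h 0, h 0⟫_𝕜 := fun N => by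
    rw [sum_range_succ', inner_add_right, inner_sum,
      sum_eq_zero fun n _ => inner_pow_succ_apply_eq_zero h0 n _, zero_add, pow_zero,
      one_apply_eq_self]
  exact tendsto_nhds_unique ((((continuous_const.inner continuous_id).tendsto f).comp
    (hsum.comp (tendsto_add_atTop_nat 1))).congr hinner) tendsto_const_nhds

theorem head_eq_zero_of_tendsto_sum_pow_apply_zero {h : ℕ → E} (h0 : S.adjoint (h 0) = 0)
    (hsum : Tendsto (fun N => ∑ n ∈ range N, (S ^ n) (h n)) atTop (𝓝 0)) :
    h 0 = 0 := by
  have := inner_eq_inner_self_of_tendsto_sum_pow_apply h0 hsum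
  rwa [inner_zero_right, eq_comm, inner_self_eq_zero] at this

theorem eq_zero_of_tendsto_sum_pow_apply_zero (hS : IsInducing S) {h : ℕ → E}
    (hker : ∀ n, S.adjoint (h n) = 0)
    (hsum : Tendsto (fun N => ∑ n ∈ range N, (S ^ n) (h n)) atTop (𝓝 0)) (n : ℕ) :
    h n = 0 := by
  induction n generalizing h with
  | zero => exact head_eq_zero_of_tendsto_sum_pow_apply_zero (hker 0) hsum
  | succ n ih =>
    exact ih (fun k => hker (k + 1)) (tendsto_sum_pow_apply_succ_of_isInducing hS
      (head_eq_zero_of_tendsto_sum_pow_apply_zero (hker 0) hsum) hsum)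

end KernelOfAdjoint

theorem stmt13_general
    (S : lp (fun _ : V => ℂ) 2 →L[ℂ] lp (fun _ : V => ℂ) 2)
    (hbelow : ∃ c : ℝ, 0 < c ∧ ∀ f : lp (fun _ : V => ℂ) 2, c * ‖f‖ ≤ ‖S f‖)
    (f : lp (fun _ : V => ℂ) 2) (F G : ℕ → lp (fun _ : V => ℂ) 2)
    (hF : ∀ n, ContinuousLinearMap.adjoint S (F n) = 0)
    (hG : ∀ n, ContinuousLinearMap.adjoint S (G n) = 0)
    (hFsum : Filter.Tendsto (fun N => ∑ n ∈ Finset.range N, (S ^ n) (F n))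
      Filter.atTop (nhds f))
    (hGsum : Filter.Tendsto (fun N => ∑ n ∈ Finset.range N, (S ^ n) (G n))
      Filter.atTop (nhds f)) :
    ∀ n : ℕ, F n = G n := by
  obtain ⟨c, hc, hb⟩ := hbelow
  intro n
  rw [← sub_eq_zero]
  refine eq_zero_of_tendsto_sum_pow_apply_zero (h := fun k => F k - G k)
    (S.isInducing_of_mul_norm_le hc hb)
    (fun k => by rw [map_sub, hF k, hG k, sub_zero]) ?_ n
  simpa only [map_sub, sum_sub_distrib, sub_self] using hFsum.sub hGsum

/-- if the weighted shift `S_λ` (complex weights) is bounded from below,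
then representations `f = ∑_{n=0}^∞ S_λⁿ f_n` with `f_n ∈ ker S_λ*` are unique. -/
theorem stmt13 [Countable V] [Infinite V] (T : DirTree V) (lam : V → ℂ)
    (S : lp (fun _ : V => ℂ) 2 →L[ℂ] lp (fun _ : V => ℂ) 2)
    (hS : ∀ f : lp (fun _ : V => ℂ) 2, ∀ v : V,
      S f v = if v = T.root then 0 else lam v * f (T.par v))
    (hbelow : ∃ c : ℝ, 0 < c ∧ ∀ f : lp (fun _ : V => ℂ) 2, c * ‖f‖ ≤ ‖S f‖)
    (f : lp (fun _ : V => ℂ) 2) (F G : ℕ → lp (fun _ : V => ℂ) 2)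
    (hF : ∀ n, ContinuousLinearMap.adjoint S (F n) = 0)
    (hG : ∀ n, ContinuousLinearMap.adjoint S (G n) = 0)
    (hFsum : Filter.Tendsto (fun N => ∑ n ∈ Finset.range N, (S ^ n) (F n))
      Filter.atTop (nhds f))
    (hGsum : Filter.Tendsto (fun N => ∑ n ∈ Finset.range N, (S ^ n) (G n))
      Filter.atTop (nhds f)) :
    ∀ n : ℕ, F n = G n :=
  stmt13_general S hbelow f F G hF hG hFsum hGsum
end
end
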